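/- arXiv:1206.5933 — 6 statements merged into one kernel-verified Lean document; each statement's English description precedes it below -/
import Mathlib

section
/- Let V be a P-graded Q(q)-vector space with locally nilpotent operators e_i (i in I) raising weight by α_i, and let B be a perfect basis of V. Then for every k ≥ 0 and i ∈ I, the subspace V_i^{<k} := Ker(e_i^k) equals the span of the basis elements b ∈ B with ε_i(b) < k, where ε_i(b) := min{n ≥ 0 : e_i^{n+1} b = 0}. -/
/-!
Write `B_m` for the basis vectors `b` with `ε b = m`. For `b ∈ B_{m+1}` perfection gives
`e^{m+1} b = c b • e^m (ẽ b)` with `ẽ b ∈ B_m`, and `ẽ` is injective on `B_{m+1}`; so by induction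
on `m` the vectors `e^m b`, `b ∈ B_m`, are linearly independent. Now expand `v ∈ Ker e^k` in `B`
and let `m ≥ k` bound `ε` on its support: applying `e^m` kills every term with `ε b < m`, and
independence of the `e^m b` with `b ∈ B_m` forces the remaining coefficients to vanish. Lowering
`m` step by step down to `k` leaves only basis vectors with `ε b < k`.
-/

open Submodule Finsupp

section PerfectBasis

variable {K V : Type*} [DivisionRing K] [AddCommGroup V] [Module K V]
  {f : Module.End K V} {ε : V → ℕ}

theorem pow_apply_eq_zero_of_lt (hε1 : ∀ v, (f ^ (ε v + 1)) v = 0) {v : V} {n : ℕ}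
    (h : ε v < n) : (f ^ n) v = 0 := by
  obtain ⟨d, rfl⟩ := Nat.exists_eq_add_of_lt h
  rw [show ε v + d + 1 = d + (ε v + 1) by omega, pow_add, Module.End.mul_apply, hε1, map_zero]

theorem apply_ne_zero_of_pos (hε2 : ∀ v n, (f ^ (n + 1)) v = 0 → ε v ≤ n) {v : V}
    (h : 0 < ε v) : f v ≠ 0 := by
  intro hv
  have := hε2 v 0 (by simpa using hv)
  omega

theorem pow_succ_apply_eq_smul_of_sub_mem_ker {x y : V} {a : K} {m : ℕ}
    (h : f x - a • y ∈ LinearMap.ker (f ^ m)) : (f ^ (m + 1)) x = a • (f ^ m) y := by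
  rw [LinearMap.mem_ker, map_sub, map_smul, sub_eq_zero] at h
  rw [pow_succ, Module.End.mul_apply, h]

theorem eq_of_pow_succ_apply_eq_smul (hε1 : ∀ v, (f ^ (ε v + 1)) v = 0)
    (hε2 : ∀ v n, (f ^ (n + 1)) v = 0 → ε v ≤ n) {x y : V} {a : K} {m : ℕ} (ha : a ≠ 0)
    (hx : ε x = m + 1) (h : (f ^ (m + 1)) x = a • (f ^ m) y) : ε y = m := by
  have hy : (f ^ (m + 1)) y = 0 := by
    have hx0 : (f ^ (m + 1 + 1)) x = 0 := hx ▸ hε1 x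
    rw [pow_succ', Module.End.mul_apply, h, map_smul, ← Module.End.mul_apply, ← pow_succ'] at hx0
    exact (smul_eq_zero.mp hx0).resolve_left ha
  have hle := hε2 y m hy
  by_contra hne
  have := hε2 x m (by rw [h, pow_apply_eq_zero_of_lt hε1 (by omega : ε y < m), smul_zero])
  omega

variable {B : Set V} {etil : V → V} {c : V → K}

theorem linearIndepOn_pow_apply (hε1 : ∀ v, (f ^ (ε v + 1)) v = 0)
    (hε2 : ∀ v n, (f ^ (n + 1)) v = 0 → ε v ≤ n) (hB : LinearIndepOn K id B)
    (hperf : ∀ b ∈ B, f b ≠ 0 →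
      etil b ∈ B ∧ c b ≠ 0 ∧ f b - c b • etil b ∈ LinearMap.ker (f ^ (ε b - 1)))
    (hinj : ∀ b ∈ B, ∀ b' ∈ B, ε b = ε b' → 0 < ε b → etil b = etil b' → b = b')
    (m : ℕ) : LinearIndepOn K (⇑(f ^ m)) {b | b ∈ B ∧ ε b = m} := by
  induction m with
  | zero =>
    rw [pow_zero, Module.End.one_eq_id, LinearMap.id_coe]
    exact hB.mono fun b hb => hb.1
  | succ m ih =>
    set S := {b | b ∈ B ∧ ε b = m + 1}
    have step : ∀ b ∈ S, etil b ∈ B ∧ c b ≠ 0 ∧ ε (etil b) = m ∧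
        (f ^ (m + 1)) b = c b • (f ^ m) (etil b) := by
      rintro b ⟨hb, hεb⟩
      obtain ⟨hetil, hc, hker⟩ := hperf b hb (apply_ne_zero_of_pos hε2 (by omega))
      rw [hεb, Nat.add_sub_cancel] at hker
      have hpow := pow_succ_apply_eq_smul_of_sub_mem_ker hker
      exact ⟨hetil, hc, eq_of_pow_succ_apply_eq_smul hε1 hε2 hc hεb hpow, hpow⟩
    have hmaps : etil '' S ⊆ {b | b ∈ B ∧ ε b = m} := by
      rintro _ ⟨b, hb, rfl⟩
      exact ⟨(step b hb).1, (step b hb).2.2.1⟩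
    have hinjOn : Set.InjOn etil S := fun b hb b' hb' h =>
      hinj b hb.1 b' hb'.1 (hb.2.trans hb'.2.symm) (hb.2 ▸ m.succ_pos) h
    have hcomp : LinearIndepOn K (⇑(f ^ m) ∘ etil) S := (ih.mono hmaps).comp_of_image hinjOn
    show LinearIndependent K fun b : S => (f ^ (m + 1)) b
    convert hcomp.units_smul fun b : S => Units.mk0 (c b) (step b b.2).2.1 using 1
    funext b
    exact (step b b.2).2.2.2

theorem lt_of_pow_linearCombination_eq_zero (hε1 : ∀ v, (f ^ (ε v + 1)) v = 0) {m : ℕ}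
    (hli : LinearIndepOn K (⇑(f ^ m)) {b | b ∈ B ∧ ε b = m}) {l : V →₀ K}
    (hlB : l ∈ supported K K B) (hle : ∀ b ∈ l.support, ε b ≤ m)
    (h0 : (f ^ m) (linearCombination K id l) = 0) : ∀ b ∈ l.support, ε b < m := by
  classical
  have hlow : linearCombination K (f ^ m) (l.filter (ε · ≠ m)) = 0 := by
    rw [linearCombination_apply]
    refine Finset.sum_eq_zero fun b hb => ?_
    rw [support_filter, Finset.mem_filter] at hb
    dsimp only
    rw [pow_apply_eq_zero_of_lt hε1 (lt_of_le_of_ne (hle b hb.1) hb.2), smul_zero]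
  have htop : l.filter (ε · = m) = 0 := by
    refine linearIndepOn_iff.mp hli _ ?_ ?_
    · rw [mem_supported, support_filter]
      intro b hb
      rw [Finset.mem_coe, Finset.mem_filter] at hb
      exact ⟨(mem_supported K l).mp hlB hb.1, hb.2⟩
    · rw [← h0, apply_linearCombination_id, ← filter_add_filter_not l (ε · = m), map_add]
      simpa using hlow
  intro b hb
  have hne : ε b ≠ m := fun h =>
    mem_support_iff.mp hb (by rw [← filter_apply_pos (ε · = m) l h, htop, Finsupp.zero_apply])
  exact lt_of_le_of_ne (hle b hb) hne

theorem ker_pow_eq_span_lt (hε1 : ∀ v, (f ^ (ε v + 1)) v = 0)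
    (hε2 : ∀ v n, (f ^ (n + 1)) v = 0 → ε v ≤ n) (hB : LinearIndepOn K id B)
    (hBspan : span K B = ⊤)
    (hperf : ∀ b ∈ B, f b ≠ 0 →
      etil b ∈ B ∧ c b ≠ 0 ∧ f b - c b • etil b ∈ LinearMap.ker (f ^ (ε b - 1)))
    (hinj : ∀ b ∈ B, ∀ b' ∈ B, ε b = ε b' → 0 < ε b → etil b = etil b' → b = b')
    (k : ℕ) : LinearMap.ker (f ^ k) = span K {b | b ∈ B ∧ ε b < k} := by
  refine le_antisymm (fun v hv => ?_) ?_
  · obtain ⟨l, hlB, rfl⟩ : ∃ l ∈ supported K K B, linearCombination K id l = v := by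
      rw [← mem_span_image_iff_linearCombination, Set.image_id, hBspan]
      exact mem_top
    have hdesc : ∀ n, (∀ b ∈ l.support, ε b < k + n) → ∀ b ∈ l.support, ε b < k := by
      intro n
      induction n with
      | zero => exact id
      | succ n ih =>
        refine fun h => ih (lt_of_pow_linearCombination_eq_zero hε1
          (linearIndepOn_pow_apply hε1 hε2 hB hperf hinj (k + n)) hlB
          (fun b hb => Nat.lt_succ_iff.mp (h b hb)) ?_)
        rw [add_comm, pow_add, Module.End.mul_apply, LinearMap.mem_ker.mp hv, map_zero]
    have hsmall := hdesc (l.support.sup ε + 1) fun b hb => by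
      have := Finset.le_sup (f := ε) hb
      omega
    rw [← Set.image_id {b | b ∈ B ∧ ε b < k}]
    exact (mem_span_image_iff_linearCombination K).mpr
      ⟨l, fun b hb => ⟨(mem_supported K l).mp hlB hb, hsmall b hb⟩, rfl⟩
  · rw [span_le]
    rintro b ⟨-, hb⟩
    exact pow_apply_eq_zero_of_lt hε1 hb

end PerfectBasis

theorem stmt_0_general {V I : Type*} [AddCommGroup V] [Module (RatFunc ℚ) V]
    (e : I → Module.End (RatFunc ℚ) V)
    -- ε_i(v) = min{n ≥ 0 : e_i^{n+1} v = 0}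
    (ε : I → V → ℕ)
    (hε1 : ∀ i v, (e i ^ (ε i v + 1)) v = 0)
    (hε2 : ∀ i v n, (e i ^ (n + 1)) v = 0 → ε i v ≤ n)
    -- B is a basis of V
    (B : Set V)
    (hBindep : LinearIndependent (RatFunc ℚ) (fun b : B => (b : V)))
    (hBspan : Submodule.span (RatFunc ℚ) B = ⊤)
    -- (b) for b ∈ B with e_i b ≠ 0 there is a unique ẽ_i(b) ∈ B and c_i(b) ∈ ℚ(q)ˣ with
    --     e_i b − c_i(b) ẽ_i(b) ∈ V_i^{<ε_i(b)−1}
    (etil : I → V → V) (c : I → V → RatFunc ℚ)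
    (hperf : ∀ (i : I), ∀ b ∈ B, e i b ≠ 0 →
        etil i b ∈ B ∧ c i b ≠ 0 ∧
        e i b - c i b • etil i b ∈ LinearMap.ker (e i ^ (ε i b - 1)))
    -- (c) injectivity of ẽ_i on basis elements with equal positive ε_i
    (hinj : ∀ (i : I), ∀ b ∈ B, ∀ b' ∈ B, ε i b = ε i b' → 0 < ε i b →
        etil i b = etil i b' → b = b') :
    ∀ (k : ℕ) (i : I),
      LinearMap.ker (e i ^ k)
        = Submodule.span (RatFunc ℚ) {b | b ∈ B ∧ ε i b < k} := fun k i =>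
  ker_pow_eq_span_lt (hε1 i) (hε2 i) hBindep hBspan (hperf i) (hinj i) k

/-- Let `V` be a `P`-graded `ℚ(q)`-vector space (with weights contained in a finite
union of cones `λ_j − Q⁺`) equipped with locally nilpotent operators `e_i` (`i ∈ I`) raising the
weight by `α_i`, and let `B` be a perfect basis of `V`.  Then for every `k ≥ 0` and `i ∈ I`,
the subspace `V_i^{<k} := Ker(e_i^k)` equals the span of the basis elements `b ∈ B` with
`ε_i(b) < k`, where `ε_i(b) := min{n ≥ 0 : e_i^{n+1} b = 0}`. -/
theorem stmt_0 {V P I : Type*} [AddCommGroup V] [Module (RatFunc ℚ) V]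
    [AddCommGroup P] [DecidableEq P]
    -- the P-grading, with e_i raising weights by α_i, wt(V) in a finite union of cones
    (α : I → P) (Vwt : P → Submodule (RatFunc ℚ) V)
    (hgrad : DirectSum.IsInternal Vwt)
    (Λs : Finset P)
    (hcone : ∀ μ : P, Vwt μ ≠ ⊥ →
      ∃ lam ∈ Λs, ∃ c : I →₀ ℕ, μ + c.sum (fun i m => m • α i) = lam)
    (e : I → Module.End (RatFunc ℚ) V)
    (hraise : ∀ (i : I) (μ : P), ∀ v ∈ Vwt μ, e i v ∈ Vwt (μ + α i))
    (hnil : ∀ (i : I) (v : V), ∃ n : ℕ, (e i ^ n) v = 0)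
    -- ε_i(v) = min{n ≥ 0 : e_i^{n+1} v = 0}
    (ε : I → V → ℕ)
    (hε1 : ∀ i v, (e i ^ (ε i v + 1)) v = 0)
    (hε2 : ∀ i v n, (e i ^ (n + 1)) v = 0 → ε i v ≤ n)
    -- B is a basis of V
    (B : Set V)
    (hBindep : LinearIndependent (RatFunc ℚ) (fun b : B => (b : V)))
    (hBspan : Submodule.span (RatFunc ℚ) B = ⊤)
    -- (a) B consists of weight vectors
    (hBwt : ∀ b ∈ B, ∃ μ, b ∈ Vwt μ)
    -- (b) for b ∈ B with e_i b ≠ 0 there is a unique ẽ_i(b) ∈ B and c_i(b) ∈ ℚ(q)ˣ with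
    --     e_i b − c_i(b) ẽ_i(b) ∈ V_i^{<ε_i(b)−1}
    (etil : I → V → V) (c : I → V → RatFunc ℚ)
    (hperf : ∀ (i : I), ∀ b ∈ B, e i b ≠ 0 →
        etil i b ∈ B ∧ c i b ≠ 0 ∧
        e i b - c i b • etil i b ∈ LinearMap.ker (e i ^ (ε i b - 1)))
    (hperf_unique : ∀ (i : I), ∀ b ∈ B, e i b ≠ 0 → ∀ b' ∈ B, ∀ c' : RatFunc ℚ, c' ≠ 0 →
        e i b - c' • b' ∈ LinearMap.ker (e i ^ (ε i b - 1)) → b' = etil i b)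
    -- (c) injectivity of ẽ_i on basis elements with equal positive ε_i
    (hinj : ∀ (i : I), ∀ b ∈ B, ∀ b' ∈ B, ε i b = ε i b' → 0 < ε i b →
        etil i b = etil i b' → b = b') :
    ∀ (k : ℕ) (i : I),
      LinearMap.ker (e i ^ k)
        = Submodule.span (RatFunc ℚ) {b | b ∈ B ∧ ε i b < k} :=
  stmt_0_general e ε hε1 hε2 B hBindep hBspan etil c hperf hinj
end

section
/- Let V be as above with a perfect basis B, and let V^H := {v ∈ V : e_i v = 0 for all i ∈ I} and B^H := B ∩ V^H. Then V^H is the Q(q)-span of B^H. -/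
/-!
Fix `i`. Since `e_i^{m+1} b = c_i(b) • e_i^m (ẽ_i b)` and `ẽ_i` maps the basis vectors with
`ε_i = m + 1` injectively to basis vectors with `ε_i = m`, induction on `m` shows that the vectors
`e_i^m b` with `b ∈ B`, `ε_i(b) = m` are linearly independent. Now let `v = ∑ l_b b` satisfy
`e_i v = 0`, and let `n` be the largest `ε_i(b)` on the support. Applying `e_i^n` kills every term
with `ε_i(b) < n` and leaves a vanishing combination of the independent vectors `e_i^n b`; so
`n = 0`, i.e. every `b` in the support of `v` is killed by `e_i`.
-/

open Set

structure IsPerfect {K V : Type*} [Field K] [AddCommGroup V] [Module K V]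
    (e : Module.End K V) (ε : V → ℕ) (B : Set V) (etil : V → V) (c : V → K) : Prop where
  pow_succ_apply_eq_zero : ∀ v, (e ^ (ε v + 1)) v = 0
  le_of_pow_succ_apply_eq_zero : ∀ v n, (e ^ (n + 1)) v = 0 → ε v ≤ n
  linearIndepOn : LinearIndepOn K id B
  perfect : ∀ b ∈ B, e b ≠ 0 →
    etil b ∈ B ∧ c b ≠ 0 ∧ e b - c b • etil b ∈ LinearMap.ker (e ^ (ε b - 1))
  injOn : ∀ b ∈ B, ∀ b' ∈ B, ε b = ε b' → 0 < ε b → etil b = etil b' → b = b'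

namespace IsPerfect

variable {K V : Type*} [Field K] [AddCommGroup V] [Module K V]
  {e : Module.End K V} {ε : V → ℕ} {B : Set V} {etil : V → V} {c : V → K}

theorem pow_apply_eq_zero_of_lt (h : IsPerfect e ε B etil c) {v : V} {n : ℕ} (hn : ε v < n) :
    (e ^ n) v = 0 := by
  rw [← Nat.sub_add_cancel hn, pow_add, Module.End.mul_apply, h.pow_succ_apply_eq_zero, map_zero]

theorem apply_ne_zero_of_pos (h : IsPerfect e ε B etil c) {v : V} (hv : 0 < ε v) : e v ≠ 0 :=
  fun h0 => hv.ne' <| Nat.le_zero.mp <| h.le_of_pow_succ_apply_eq_zero v 0 (by simpa using h0)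

theorem pow_succ_apply_eq_smul (h : IsPerfect e ε B etil c) {b : V} (hb : b ∈ B) {m : ℕ}
    (hεb : ε b = m + 1) : (e ^ (m + 1)) b = c b • (e ^ m) (etil b) := by
  have hker := (h.perfect b hb (h.apply_ne_zero_of_pos (by omega))).2.2
  rw [hεb, Nat.add_sub_cancel, LinearMap.mem_ker, map_sub, map_smul, sub_eq_zero] at hker
  rw [pow_succ, Module.End.mul_apply, hker]

theorem eps_etil (h : IsPerfect e ε B etil c) {b : V} (hb : b ∈ B) {m : ℕ}
    (hεb : ε b = m + 1) : ε (etil b) = m := by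
  have hc := (h.perfect b hb (h.apply_ne_zero_of_pos (by omega))).2.1
  have hpow := h.pow_succ_apply_eq_smul hb hεb
  refine le_antisymm (h.le_of_pow_succ_apply_eq_zero _ _ ?_) ?_
  · have h0 := h.pow_succ_apply_eq_zero b
    rw [hεb, pow_succ', Module.End.mul_apply, hpow, map_smul, ← Module.End.mul_apply,
      ← pow_succ'] at h0
    exact (smul_eq_zero.mp h0).resolve_left hc
  · by_contra! hlt
    have := h.le_of_pow_succ_apply_eq_zero b m
      (by rw [hpow, h.pow_apply_eq_zero_of_lt hlt, smul_zero])
    omega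

theorem linearIndepOn_pow (h : IsPerfect e ε B etil c) (m : ℕ) :
    LinearIndepOn K ⇑(e ^ m) {b ∈ B | ε b = m} := by
  induction m with
  | zero =>
    refine (h.linearIndepOn.mono fun b hb => hb.1).congr fun b _ => ?_
    simp
  | succ m ih =>
    have hmaps : MapsTo etil {b ∈ B | ε b = m + 1} {b ∈ B | ε b = m} := fun b hb =>
      ⟨(h.perfect b hb.1 (h.apply_ne_zero_of_pos (hb.2 ▸ m.succ_pos))).1, h.eps_etil hb.1 hb.2⟩
    have hinj : InjOn etil {b ∈ B | ε b = m + 1} := fun b hb b' hb' hbb' =>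
      h.injOn b hb.1 b' hb'.1 (hb.2.trans hb'.2.symm) (hb.2 ▸ m.succ_pos) hbb'
    have hcomp : LinearIndepOn K (⇑(e ^ m) ∘ etil) {b ∈ B | ε b = m + 1} :=
      (ih.mono hmaps.image_subset).comp_of_image hinj
    let w : {b ∈ B | ε b = m + 1} → Kˣ := fun b =>
      Units.mk0 (c b) (h.perfect b b.2.1 (h.apply_ne_zero_of_pos (by rw [b.2.2]; exact m.succ_pos))).2.1
    have hscale : (w • fun b : {b ∈ B | ε b = m + 1} => (⇑(e ^ m) ∘ etil) b) =
        fun b : {b ∈ B | ε b = m + 1} => (e ^ (m + 1)) b :=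
      funext fun b => (h.pow_succ_apply_eq_smul b.2.1 b.2.2).symm
    unfold LinearIndepOn
    rw [← hscale]
    exact hcomp.units_smul w

theorem apply_eq_zero_of_mem_support (h : IsPerfect e ε B etil c) {l : V →₀ K}
    (hl : l ∈ Finsupp.supported K K B) (hv : e (Finsupp.linearCombination K id l) = 0)
    {b : V} (hb : b ∈ l.support) : e b = 0 := by
  classical
  suffices ε b = 0 by simpa [this] using h.pow_succ_apply_eq_zero b
  by_contra hb0
  obtain ⟨bmax, hbmax, hmax⟩ := Finset.exists_mem_eq_sup l.support ⟨b, hb⟩ ε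
  set n := l.support.sup ε
  have hn : 0 < n := (Nat.pos_of_ne_zero hb0).trans_le (Finset.le_sup hb)
  have hlow : ∀ b' ∈ l.support, ¬ε b' = n → (e ^ n) b' = 0 := fun b' hb' hne =>
    h.pow_apply_eq_zero_of_lt ((Finset.le_sup hb').lt_of_ne hne)
  have hrest : Finsupp.linearCombination K ⇑(e ^ n) (l.filter (¬ε · = n)) = 0 := by
    rw [Finsupp.linearCombination_apply]
    refine Finset.sum_eq_zero fun b' hb' => ?_
    rw [Finsupp.support_filter, Finset.mem_filter] at hb'
    simp only [hlow b' hb'.1 hb'.2, smul_zero]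
  have htop : Finsupp.linearCombination K ⇑(e ^ n) (l.filter (ε · = n)) = 0 := by
    calc Finsupp.linearCombination K ⇑(e ^ n) (l.filter (ε · = n))
        = Finsupp.linearCombination K ⇑(e ^ n) l := by
          conv_rhs => rw [← Finsupp.filter_add_filter_not l (ε · = n), map_add, hrest, add_zero]
      _ = (e ^ (n - 1)) (e (Finsupp.linearCombination K id l)) := by
          rw [← Module.End.mul_apply, ← pow_succ, Nat.sub_add_cancel hn,
            Finsupp.apply_linearCombination_id]
      _ = 0 := by rw [hv, map_zero]
  have hsupp : l.filter (ε · = n) ∈ Finsupp.supported K K {b ∈ B | ε b = n} := by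
    intro b' hb'
    rw [Finsupp.support_filter, Finset.coe_filter] at hb'
    exact ⟨hl hb'.1, hb'.2⟩
  have hzero := linearIndepOn_iff.mp (h.linearIndepOn_pow n) _ hsupp htop
  have := DFunLike.congr_fun hzero bmax
  rw [Finsupp.filter_apply_pos (ε · = n) l hmax.symm] at this
  exact Finsupp.mem_support_iff.mp hbmax this

end IsPerfect

theorem stmt_1_general {V I : Type*} [AddCommGroup V] [Module (RatFunc ℚ) V]
    (e : I → Module.End (RatFunc ℚ) V)
    -- ε_i(v) = min{n ≥ 0 : e_i^{n+1} v = 0}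
    (ε : I → V → ℕ)
    (hε1 : ∀ i v, (e i ^ (ε i v + 1)) v = 0)
    (hε2 : ∀ i v n, (e i ^ (n + 1)) v = 0 → ε i v ≤ n)
    -- B is a basis of V
    (B : Set V)
    (hBindep : LinearIndependent (RatFunc ℚ) (fun b : B => (b : V)))
    (hBspan : Submodule.span (RatFunc ℚ) B = ⊤)
    -- (b) for b ∈ B with e_i b ≠ 0 there is a unique ẽ_i(b) ∈ B and c_i(b) ∈ ℚ(q)ˣ with
    --     e_i b − c_i(b) ẽ_i(b) ∈ V_i^{<ε_i(b)−1}
    (etil : I → V → V) (c : I → V → RatFunc ℚ)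
    (hperf : ∀ (i : I), ∀ b ∈ B, e i b ≠ 0 →
        etil i b ∈ B ∧ c i b ≠ 0 ∧
        e i b - c i b • etil i b ∈ LinearMap.ker (e i ^ (ε i b - 1)))
    -- (c) injectivity of ẽ_i on basis elements with equal positive ε_i
    (hinj : ∀ (i : I), ∀ b ∈ B, ∀ b' ∈ B, ε i b = ε i b' → 0 < ε i b →
        etil i b = etil i b' → b = b') :
    (⨅ i : I, LinearMap.ker (e i))
      = Submodule.span (RatFunc ℚ) {b | b ∈ B ∧ ∀ i : I, e i b = 0} := by
  have hB (i : I) : IsPerfect (e i) (ε i) B (etil i) (c i) :=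
    ⟨hε1 i, hε2 i, hBindep, hperf i, hinj i⟩
  refine le_antisymm (fun v hv => ?_)
    (Submodule.span_le.mpr fun b hb => Submodule.mem_iInf _ |>.mpr hb.2)
  have hvB : v ∈ Submodule.span (RatFunc ℚ) (id '' B) := by
    rw [Set.image_id, hBspan]
    trivial
  obtain ⟨l, hl, rfl⟩ := (Finsupp.mem_span_image_iff_linearCombination _).mp hvB
  rw [Submodule.mem_iInf] at hv
  rw [← Set.image_id {b | b ∈ B ∧ ∀ i : I, e i b = 0}]
  exact (Finsupp.mem_span_image_iff_linearCombination _).mpr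
    ⟨l, fun b hb => ⟨hl hb, fun i => (hB i).apply_eq_zero_of_mem_support hl (hv i) hb⟩, rfl⟩

/-- Let `V` be a `P`-graded `ℚ(q)`-vector space with weight-raising, locally
nilpotent operators `e_i` and a perfect basis `B`, and let `V^H := {v ∈ V : e_i v = 0 ∀ i}`
and `B^H := B ∩ V^H`.  Then `V^H` is the `ℚ(q)`-span of `B^H`. -/
theorem stmt_1 {V P I : Type*} [AddCommGroup V] [Module (RatFunc ℚ) V]
    [AddCommGroup P] [DecidableEq P]
    -- the P-grading, with e_i raising weights by α_i, wt(V) in a finite union of cones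
    (α : I → P) (Vwt : P → Submodule (RatFunc ℚ) V)
    (hgrad : DirectSum.IsInternal Vwt)
    (Λs : Finset P)
    (hcone : ∀ μ : P, Vwt μ ≠ ⊥ →
      ∃ lam ∈ Λs, ∃ c : I →₀ ℕ, μ + c.sum (fun i m => m • α i) = lam)
    (e : I → Module.End (RatFunc ℚ) V)
    (hraise : ∀ (i : I) (μ : P), ∀ v ∈ Vwt μ, e i v ∈ Vwt (μ + α i))
    (hnil : ∀ (i : I) (v : V), ∃ n : ℕ, (e i ^ n) v = 0)
    -- ε_i(v) = min{n ≥ 0 : e_i^{n+1} v = 0}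
    (ε : I → V → ℕ)
    (hε1 : ∀ i v, (e i ^ (ε i v + 1)) v = 0)
    (hε2 : ∀ i v n, (e i ^ (n + 1)) v = 0 → ε i v ≤ n)
    -- B is a basis of V
    (B : Set V)
    (hBindep : LinearIndependent (RatFunc ℚ) (fun b : B => (b : V)))
    (hBspan : Submodule.span (RatFunc ℚ) B = ⊤)
    -- (a) B consists of weight vectors
    (hBwt : ∀ b ∈ B, ∃ μ, b ∈ Vwt μ)
    -- (b) for b ∈ B with e_i b ≠ 0 there is a unique ẽ_i(b) ∈ B and c_i(b) ∈ ℚ(q)ˣ with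
    --     e_i b − c_i(b) ẽ_i(b) ∈ V_i^{<ε_i(b)−1}
    (etil : I → V → V) (c : I → V → RatFunc ℚ)
    (hperf : ∀ (i : I), ∀ b ∈ B, e i b ≠ 0 →
        etil i b ∈ B ∧ c i b ≠ 0 ∧
        e i b - c i b • etil i b ∈ LinearMap.ker (e i ^ (ε i b - 1)))
    (hperf_unique : ∀ (i : I), ∀ b ∈ B, e i b ≠ 0 → ∀ b' ∈ B, ∀ c' : RatFunc ℚ, c' ≠ 0 →
        e i b - c' • b' ∈ LinearMap.ker (e i ^ (ε i b - 1)) → b' = etil i b)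
    -- (c) injectivity of ẽ_i on basis elements with equal positive ε_i
    (hinj : ∀ (i : I), ∀ b ∈ B, ∀ b' ∈ B, ε i b = ε i b' → 0 < ε i b →
        etil i b = etil i b' → b = b') :
    (⨅ i : I, LinearMap.ker (e i))
      = Submodule.span (RatFunc ℚ) {b | b ∈ B ∧ ∀ i : I, e i b = 0} :=
  stmt_1_general e ε hε1 hε2 B hBindep hBspan etil c hperf hinj
end

section
/- Let B be a strong perfect basis of V, let b₀ ∈ B^H and let 𝐢 = (i₁,…,i_m) be a finite sequence in I. Then the set S := {b ∈ B : e_𝐢^top(b) = b₀} is linearly ordered by the binary relation ⪯_𝐢. -/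
/-- `q_i := q^{s_i}` inside `ℚ(q) = RatFunc ℚ` (with `q = X`). -/
noncomputable def qpow (s : ℕ) : RatFunc ℚ := RatFunc.X ^ s

/-- The q-integer `[n]_i = (q_i^n − q_i^{−n})/(q_i − q_i^{−1})`. -/
noncomputable def qInt (s : ℕ) (n : ℕ) : RatFunc ℚ :=
  ((qpow s) ^ n - (qpow s)⁻¹ ^ n) / (qpow s - (qpow s)⁻¹)

/-- The q-factorial `[m]_i!`. -/
noncomputable def qFact (s : ℕ) (m : ℕ) : RatFunc ℚ :=
  ∏ j ∈ Finset.range m, qInt s (j + 1)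

/-- `e_ii^top = e_{i_m}^top ∘ ⋯ ∘ e_{i_1}^top`, where
`e_i^top (v) = e_i^{(ε_i(v))} v = ([ε_i(v)]_i!)⁻¹ e_i^{ε_i(v)} v`. -/
noncomputable def eTopList {V I : Type*} [AddCommGroup V] [Module (RatFunc ℚ) V]
    (s : I → ℕ) (e : I → Module.End (RatFunc ℚ) V) (ε : I → V → ℕ) :
    List I → V → V
  | [], v => v
  | i :: is, v => eTopList s e ε is ((qFact (s i) (ε i v))⁻¹ • (e i ^ ε i v) v)

/-- The binary relation `⪯_ii`, defined inductively on the sequence `ii`: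
for `ii = (i)`, `v ⪯ v'` iff `ε_i(v) ≤ ε_i(v')`; for `ii = (i; ii')`, `v ⪯_ii v'` iff
`ε_i(v) < ε_i(v')`, or `ε_i(v) = ε_i(v')` and `e_i^{ε_i(v)} v ⪯_{ii'} e_i^{ε_i(v')} v'`. -/
def precRel {V I : Type*} (e : I → V → V) (ε : I → V → ℕ) :
    List I → V → V → Prop
  | [], _, _ => True
  | i :: is, v, v' =>
      ε i v < ε i v' ∨
        (ε i v = ε i v' ∧ precRel e ε is ((e i)^[ε i v] v) ((e i)^[ε i v'] v'))

/-!
If `b ∈ B` has `ε_i b = n + 1`, the strong condition gives `e_i^{n+1} b = [n+1]_i e_i^n (ẽ_i b)`,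
which forces `ε_i (ẽ_i b) = n`. Iterating, `e_i^{ε_i b} b = [ε_i b]_i! ẽ_i^{ε_i b} b` with
`ẽ_i^{ε_i b} b ∈ B`, and `ẽ_i^n` is injective on `{b ∈ B : ε_i b = n}`. Since `⪯` is insensitive
to nonzero scalars, `b ⪯_{(i;𝐢')} b'` on `B` compares `ε_i` first and then `ẽ_i^{ε_i b} b` with
`ẽ_i^{ε_i b'} b'` under `⪯_{𝐢'}`, while `e_𝐢^top b = e_{𝐢'}^top (ẽ_i^{ε_i b} b)`. Totality is
immediate from the lexicographic shape, and antisymmetry on a fibre of `e_𝐢^top` follows by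
induction on `𝐢` from the injectivity of `ẽ_i^{n}`.
-/

open Module

lemma qpow_pow_ne_inv {s n : ℕ} (hs : 0 < s) (hn : 0 < n) : qpow s ^ n ≠ (qpow s ^ n)⁻¹ := by
  intro h
  have hdeg := congrArg RatFunc.intDegree h
  rw [RatFunc.intDegree_inv, qpow, ← pow_mul, ← RatFunc.algebraMap_X, ← map_pow,
    RatFunc.intDegree_polynomial, Polynomial.natDegree_X_pow] at hdeg
  have := Nat.mul_pos hs hn
  omega

lemma qInt_succ_ne_zero {s : ℕ} (hs : 0 < s) (n : ℕ) : qInt s (n + 1) ≠ 0 := by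
  refine div_ne_zero ?_ ?_ <;> rw [sub_ne_zero]
  · rw [inv_pow]
    exact qpow_pow_ne_inv hs n.succ_pos
  · simpa using qpow_pow_ne_inv hs one_pos

lemma qFact_ne_zero {s : ℕ} (hs : 0 < s) (n : ℕ) : qFact s n ≠ 0 :=
  Finset.prod_ne_zero_iff.2 fun j _ => qInt_succ_ne_zero hs j

lemma Module.End.pow_succ_apply_eq_smul_of_mem_ker {K V : Type*} [Field K] [AddCommGroup V]
    [Module K V] {f : End K V} {x y : V} {c : K} {n m : ℕ}
    (h : f x - c • y ∈ LinearMap.ker (f ^ n)) (hm : n ≤ m) :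
    (f ^ (m + 1)) x = c • (f ^ m) y := by
  rw [LinearMap.mem_ker, map_sub, map_smul, sub_eq_zero] at h
  obtain ⟨k, rfl⟩ := Nat.exists_eq_add_of_le hm
  rw [pow_succ, End.mul_apply, add_comm, pow_add, End.mul_apply, End.mul_apply, h, map_smul]

/-- `ε v` is the length of the `f`-string through `v`: the largest `n` with `f^n v ≠ 0`
(and `0` for `v = 0`). -/
def IsStringLength {R M : Type*} [Semiring R] [AddCommMonoid M] [Module R M] (f : End R M)
    (ε : M → ℕ) : Prop :=
  ∀ v n, ε v ≤ n ↔ (f ^ (n + 1)) v = 0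

namespace IsStringLength

section Semiring

variable {R M : Type*} [Semiring R] [AddCommMonoid M] [Module R M] {f : End R M} {ε : M → ℕ}

lemma of_pow_succ (h₁ : ∀ v, (f ^ (ε v + 1)) v = 0)
    (h₂ : ∀ v n, (f ^ (n + 1)) v = 0 → ε v ≤ n) : IsStringLength f ε :=
  fun v _ => ⟨fun hn => End.pow_map_zero_of_le (by omega) (h₁ v), h₂ v _⟩

lemma pow_apply_eq_zero (hε : IsStringLength f ε) {v : M} {m : ℕ} (hm : ε v < m) :
    (f ^ m) v = 0 := by
  obtain ⟨n, rfl⟩ := Nat.exists_eq_add_of_lt hm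
  exact (hε v _).1 (by omega)

lemma apply_ne_zero (hε : IsStringLength f ε) {v : M} (hv : 0 < ε v) : f v ≠ 0 := fun h => by
  have := (hε v 0).2 (by simpa using h)
  omega

end Semiring

variable {K V : Type*} [Field K] [AddCommGroup V] [Module K V] {f : End K V} {ε : V → ℕ}

lemma smul_eq (hε : IsStringLength f ε) {c : K} (hc : c ≠ 0) (v : V) : ε (c • v) = ε v :=
  eq_of_forall_ge_iff fun n => by rw [hε, hε, map_smul, smul_eq_zero, or_iff_right hc]

lemma eq_of_sub_smul_mem_ker (hε : IsStringLength f ε) {x y : V} {c : K} {n : ℕ} (hc : c ≠ 0)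
    (hx : ε x = n + 1) (h : f x - c • y ∈ LinearMap.ker (f ^ n)) : ε y = n := by
  have hxy m (hm : n ≤ m) := End.pow_succ_apply_eq_smul_of_mem_ker h hm
  apply le_antisymm
  · rw [hε, ← smul_eq_zero_iff_right hc, ← hxy _ (by omega)]
    exact hε.pow_apply_eq_zero (by omega)
  · by_contra! hlt
    have := (hε x n).2 (by rw [hxy n le_rfl, hε.pow_apply_eq_zero hlt, smul_zero])
    omega

end IsStringLength

/-- The strong perfect basis axioms for one index `i`, with `f = e_i`, `ε = ε_i`, `g = ẽ_i` and
`q n = [n]_i`. -/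
structure IsStrongPerfect {K V : Type*} [Field K] [AddCommGroup V] [Module K V] (f : End K V)
    (ε : V → ℕ) (q : ℕ → K) (B : Set V) (g : V → V) : Prop where
  map_mem' : ∀ b ∈ B, f b ≠ 0 → g b ∈ B
  sub_smul_mem_ker' : ∀ b ∈ B, f b ≠ 0 → f b - q (ε b) • g b ∈ LinearMap.ker (f ^ (ε b - 1))
  injOn : ∀ b ∈ B, ∀ b' ∈ B, ε b = ε b' → 0 < ε b → g b = g b' → b = b'

namespace IsStrongPerfect

variable {K V : Type*} [Field K] [AddCommGroup V] [Module K V] {f : End K V} {ε : V → ℕ}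
  {q : ℕ → K} {B : Set V} {g : V → V} {b b' : V} {n : ℕ}

lemma map_mem (hB : IsStrongPerfect f ε q B g) (hε : IsStringLength f ε) (hb : b ∈ B)
    (hpos : 0 < ε b) : g b ∈ B :=
  hB.map_mem' b hb (hε.apply_ne_zero hpos)

lemma sub_smul_mem_ker (hB : IsStrongPerfect f ε q B g) (hε : IsStringLength f ε) (hb : b ∈ B)
    (hn : ε b = n + 1) : f b - q (n + 1) • g b ∈ LinearMap.ker (f ^ n) := by
  simpa only [hn, Nat.add_sub_cancel] using hB.sub_smul_mem_ker' b hb (hε.apply_ne_zero (by omega))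

lemma eps_map (hB : IsStrongPerfect f ε q B g) (hε : IsStringLength f ε) (hq : q (n + 1) ≠ 0)
    (hb : b ∈ B) (hn : ε b = n + 1) : ε (g b) = n :=
  hε.eq_of_sub_smul_mem_ker hq hn (hB.sub_smul_mem_ker hε hb hn)

lemma pow_succ_apply (hB : IsStrongPerfect f ε q B g) (hε : IsStringLength f ε) (hb : b ∈ B)
    (hn : ε b = n + 1) : (f ^ (n + 1)) b = q (n + 1) • (f ^ n) (g b) :=
  End.pow_succ_apply_eq_smul_of_mem_ker (hB.sub_smul_mem_ker hε hb hn) le_rfl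

lemma iterate_mem (hB : IsStrongPerfect f ε q B g) (hε : IsStringLength f ε)
    (hq : ∀ n, q (n + 1) ≠ 0) (hb : b ∈ B) (hn : ε b = n) : g^[n] b ∈ B := by
  induction n generalizing b with
  | zero => exact hb
  | succ n ih => exact ih (hB.map_mem hε hb (by omega)) (hB.eps_map hε (hq n) hb hn)

lemma pow_apply_eq_smul_iterate (hB : IsStrongPerfect f ε q B g) (hε : IsStringLength f ε)
    (hq : ∀ n, q (n + 1) ≠ 0) (hb : b ∈ B) (hn : ε b = n) :
    (f ^ n) b = (∏ j ∈ Finset.range n, q (j + 1)) • g^[n] b := by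
  induction n generalizing b with
  | zero => simp
  | succ n ih =>
    rw [hB.pow_succ_apply hε hb hn, ih (hB.map_mem hε hb (by omega)) (hB.eps_map hε (hq n) hb hn),
      smul_smul, Finset.prod_range_succ, mul_comm, Function.iterate_succ_apply]

lemma iterate_inj (hB : IsStrongPerfect f ε q B g) (hε : IsStringLength f ε)
    (hq : ∀ n, q (n + 1) ≠ 0) (hb : b ∈ B) (hb' : b' ∈ B) (hn : ε b = n) (hn' : ε b' = n)
    (h : g^[n] b = g^[n] b') : b = b' := by
  induction n generalizing b b' with
  | zero => exact h
  | succ n ih =>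
    refine hB.injOn b hb b' hb' (hn.trans hn'.symm) (by omega) (ih ?_ ?_ ?_ ?_ h)
    · exact hB.map_mem hε hb (by omega)
    · exact hB.map_mem hε hb' (by omega)
    · exact hB.eps_map hε (hq n) hb hn
    · exact hB.eps_map hε (hq n) hb' hn'

end IsStrongPerfect

lemma precRel_total {V I : Type*} (e : I → V → V) (ε : I → V → ℕ) (l : List I) (v v' : V) :
    precRel e ε l v v' ∨ precRel e ε l v' v := by
  induction l generalizing v v' with
  | nil => exact Or.inl trivial
  | cons i l ih =>
    rcases lt_trichotomy (ε i v) (ε i v') with h | h | h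
    · exact Or.inl (Or.inl h)
    · exact (ih _ _).imp (fun h' => Or.inr ⟨h, h'⟩) (fun h' => Or.inr ⟨h.symm, h'⟩)
    · exact Or.inr (Or.inl h)

lemma precRel_smul {K V I : Type*} [Field K] [AddCommGroup V] [Module K V]
    {e : I → End K V} {ε : I → V → ℕ} (hε : ∀ i, IsStringLength (e i) (ε i)) {c : K}
    (hc : c ≠ 0) (l : List I) (v v' : V) :
    precRel (fun i => ⇑(e i)) ε l (c • v) (c • v') ↔ precRel (fun i => ⇑(e i)) ε l v v' := by
  induction l generalizing v v' with
  | nil => rfl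
  | cons i l ih =>
    simp only [precRel, (hε i).smul_eq hc, ← End.pow_apply, map_smul, ih]

section StrongPerfectBasis

variable {V I : Type*} [AddCommGroup V] [Module (RatFunc ℚ) V] {s : I → ℕ}
  {e : I → End (RatFunc ℚ) V} {ε : I → V → ℕ} {B : Set V} {etil : I → V → V}

lemma eTopList_cons_of_mem (hs : ∀ i, 0 < s i) (hε : ∀ i, IsStringLength (e i) (ε i))
    (hB : ∀ i, IsStrongPerfect (e i) (ε i) (qInt (s i)) B (etil i)) {b : V} (hb : b ∈ B)
    (i : I) (l : List I) :
    eTopList s e ε (i :: l) b = eTopList s e ε l ((etil i)^[ε i b] b) := by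
  rw [eTopList, (hB i).pow_apply_eq_smul_iterate (hε i) (qInt_succ_ne_zero (hs i))
    hb rfl, ← qFact, inv_smul_smul₀ (qFact_ne_zero (hs i) _)]

lemma precRel_cons_iff_of_mem (hs : ∀ i, 0 < s i) (hε : ∀ i, IsStringLength (e i) (ε i))
    (hB : ∀ i, IsStrongPerfect (e i) (ε i) (qInt (s i)) B (etil i)) {b b' : V} (hb : b ∈ B)
    (hb' : b' ∈ B) (i : I) (l : List I) :
    precRel (fun i => ⇑(e i)) ε (i :: l) b b' ↔
      ε i b < ε i b' ∨ ε i b = ε i b' ∧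
        precRel (fun i => ⇑(e i)) ε l ((etil i)^[ε i b] b) ((etil i)^[ε i b'] b') := by
  have hq := qInt_succ_ne_zero (hs i)
  refine or_congr_right (and_congr_right fun heq => ?_)
  rw [← End.pow_apply, ← End.pow_apply, (hB i).pow_apply_eq_smul_iterate (hε i) hq hb rfl,
    (hB i).pow_apply_eq_smul_iterate (hε i) hq hb' rfl, ← heq, ← qFact,
    precRel_smul hε (qFact_ne_zero (hs i) _)]

theorem precRel_antisymm_of_eTopList_eq (hs : ∀ i, 0 < s i)
    (hε : ∀ i, IsStringLength (e i) (ε i))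
    (hB : ∀ i, IsStrongPerfect (e i) (ε i) (qInt (s i)) B (etil i)) (l : List I) {b b' : V}
    (hb : b ∈ B) (hb' : b' ∈ B) (htop : eTopList s e ε l b = eTopList s e ε l b')
    (h : precRel (fun i => ⇑(e i)) ε l b b') (h' : precRel (fun i => ⇑(e i)) ε l b' b) :
    b = b' := by
  induction l generalizing b b' with
  | nil => exact htop
  | cons i l ih =>
    rw [precRel_cons_iff_of_mem hs hε hB hb hb'] at h
    rw [precRel_cons_iff_of_mem hs hε hB hb' hb] at h'
    rw [eTopList_cons_of_mem hs hε hB hb, eTopList_cons_of_mem hs hε hB hb'] at htop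
    obtain ⟨heq, hrel⟩ := h.resolve_left fun hlt => by rcases h' with h' | ⟨h', -⟩ <;> omega
    have hrel' := (h'.resolve_left (by omega)).2
    have hq := qInt_succ_ne_zero (hs i)
    have htil := ih ((hB i).iterate_mem (hε i) hq hb rfl) ((hB i).iterate_mem (hε i) hq hb' rfl)
      htop hrel hrel'
    rw [← heq] at htil
    exact (hB i).iterate_inj (hε i) hq hb hb' rfl heq.symm htil

end StrongPerfectBasis

theorem stmt_2_general {V I : Type*} [AddCommGroup V] [Module (RatFunc ℚ) V]
    (s : I → ℕ) (hs : ∀ i, 0 < s i)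
    (e : I → Module.End (RatFunc ℚ) V)
    (ε : I → V → ℕ)
    (hε1 : ∀ i v, (e i ^ (ε i v + 1)) v = 0)
    (hε2 : ∀ i v n, (e i ^ (n + 1)) v = 0 → ε i v ≤ n)
    (B : Set V)
    -- strong perfect basis: e_i b − [ε_i(b)]_i ẽ_i(b) ∈ Ker e_i^{ε_i(b)−1}
    (etil : I → V → V)
    (hperf : ∀ (i : I), ∀ b ∈ B, e i b ≠ 0 →
        etil i b ∈ B ∧
        e i b - qInt (s i) (ε i b) • etil i b ∈ LinearMap.ker (e i ^ (ε i b - 1)))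
    (hinj : ∀ (i : I), ∀ b ∈ B, ∀ b' ∈ B, ε i b = ε i b' → 0 < ε i b →
        etil i b = etil i b' → b = b')
    (b₀ : V)
    (ii : List I) :
    ∀ b ∈ {b | b ∈ B ∧ eTopList s e ε ii b = b₀},
      ∀ b' ∈ {b | b ∈ B ∧ eTopList s e ε ii b = b₀},
        (precRel (fun i => ⇑(e i)) ε ii b b' ∨ precRel (fun i => ⇑(e i)) ε ii b' b) ∧
        (precRel (fun i => ⇑(e i)) ε ii b b' → precRel (fun i => ⇑(e i)) ε ii b' b → b = b') := by
  have hε i : IsStringLength (e i) (ε i) := .of_pow_succ (hε1 i) (hε2 i)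
  have hB i : IsStrongPerfect (e i) (ε i) (qInt (s i)) B (etil i) :=
    ⟨fun b hb h => (hperf i b hb h).1, fun b hb h => (hperf i b hb h).2, hinj i⟩
  intro b hb b' hb'
  exact ⟨precRel_total _ _ ii b b',
    precRel_antisymm_of_eTopList_eq hs hε hB ii hb.1 hb'.1 (hb.2.trans hb'.2.symm)⟩

/-- Let `B` be a strong perfect basis of `V`, let `b₀ ∈ B^H` and let
`ii = (i₁,…,i_m)` be a finite sequence in `I`.  Then `S := {b ∈ B : e_ii^top(b) = b₀}` is
linearly ordered by `⪯_ii` (the relation is total on `S`, and any two `⪯_ii`-equivalent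
elements of `S` coincide). -/
theorem stmt_2 {V P I : Type*} [AddCommGroup V] [Module (RatFunc ℚ) V]
    [AddCommGroup P] [DecidableEq P]
    (s : I → ℕ) (hs : ∀ i, 0 < s i)
    (α : I → P) (Vwt : P → Submodule (RatFunc ℚ) V)
    (hgrad : DirectSum.IsInternal Vwt)
    (e : I → Module.End (RatFunc ℚ) V)
    (hraise : ∀ (i : I) (μ : P), ∀ v ∈ Vwt μ, e i v ∈ Vwt (μ + α i))
    (hnil : ∀ (i : I) (v : V), ∃ n : ℕ, (e i ^ n) v = 0)
    (ε : I → V → ℕ)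
    (hε1 : ∀ i v, (e i ^ (ε i v + 1)) v = 0)
    (hε2 : ∀ i v n, (e i ^ (n + 1)) v = 0 → ε i v ≤ n)
    (B : Set V)
    (hBindep : LinearIndependent (RatFunc ℚ) (fun b : B => (b : V)))
    (hBspan : Submodule.span (RatFunc ℚ) B = ⊤)
    (hBwt : ∀ b ∈ B, ∃ μ, b ∈ Vwt μ)
    -- strong perfect basis: e_i b − [ε_i(b)]_i ẽ_i(b) ∈ Ker e_i^{ε_i(b)−1}
    (etil : I → V → V)
    (hperf : ∀ (i : I), ∀ b ∈ B, e i b ≠ 0 →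
        etil i b ∈ B ∧
        e i b - qInt (s i) (ε i b) • etil i b ∈ LinearMap.ker (e i ^ (ε i b - 1)))
    (hinj : ∀ (i : I), ∀ b ∈ B, ∀ b' ∈ B, ε i b = ε i b' → 0 < ε i b →
        etil i b = etil i b' → b = b')
    -- b₀ ∈ B^H and the sequence ii
    (b₀ : V) (hb₀B : b₀ ∈ B) (hb₀H : ∀ i : I, e i b₀ = 0)
    (ii : List I) :
    ∀ b ∈ {b | b ∈ B ∧ eTopList s e ε ii b = b₀},
      ∀ b' ∈ {b | b ∈ B ∧ eTopList s e ε ii b = b₀},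
        (precRel (fun i => ⇑(e i)) ε ii b b' ∨ precRel (fun i => ⇑(e i)) ε ii b' b) ∧
        (precRel (fun i => ⇑(e i)) ε ii b b' → precRel (fun i => ⇑(e i)) ε ii b' b → b = b') :=
  stmt_2_general s hs e ε hε1 hε2 B etil hperf hinj b₀ ii
end

section
/- In the nil-Hecke-type superalgebra R(nα_i), the elements b_k := τ_k x_{k+1} (1 ≤ k < n) satisfy the braid relations: b_r b_s = b_s b_r if |r − s| > 1, and b_r b_{r+1} b_r = b_{r+1} b_r b_{r+1} for 1 ≤ r < n−1. -/
/-!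
Write `E = (-1)^{p(i)}`: it is central with `E² = 1`, and every defining relation is a
supercommutation `a b = E b a`, up to the constant term `1` in the mixed relations.
For distant indices, `b_r` and `b_s` are products of two factors each supercommuting with the two
factors of the other, so the four signs cancel. For the braid relation, pushing `x`'s to the right
with the mixed relations for `τ_{r+1}` turns both `b_r b_{r+1} b_r` and `b_{r+1} b_r b_{r+1}` into
a braid word in the `τ`'s times `x_{r+2} x_{r+1} x_{r+2}`; the error terms vanish because
`τ_r² = 0` on one side and cancel in pairs on the other, and the braid relation for the `τ`'s
finishes the proof.
-/

section CentralInvolution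

variable {R : Type*} [Ring R] {E : R}

theorem mul_swap_eq_of_mul_eq_mul_swap (hE : E * E = 1) {a b : R}
    (h : a * b = E * (b * a)) : b * a = E * (a * b) := by
  rw [h, ← mul_assoc, hE, one_mul]

theorem eq_mul_sub_of_sub_mul_eq_one (hE : E * E = 1) {a b : R} (h : a - E * b = 1) :
    b = E * a - E := by
  rw [← one_mul b, ← hE, mul_assoc, ← sub_sub_cancel a (E * b), h, mul_sub, mul_one]

variable (hE : E * E = 1) (hEc : ∀ z, Commute E z)
include hE hEc

theorem commute_mul_left_of_mul_eq_mul_swap {a b c : R}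
    (ha : a * c = E * (c * a)) (hb : b * c = E * (c * b)) : Commute (a * b) c := by
  calc a * b * c = E * E * (c * a * b) := by
        rw [mul_assoc, hb, (hEc _).symm.left_comm, ← mul_assoc a, ha]; simp only [mul_assoc]
    _ = c * (a * b) := by rw [hE, one_mul, mul_assoc]

theorem commute_mul_mul_of_mul_eq_mul_swap {t₁ t₂ y₁ y₂ : R}
    (ht : t₁ * t₂ = E * (t₂ * t₁)) (ht₂y₁ : t₂ * y₁ = E * (y₁ * t₂))
    (ht₁y₂ : t₁ * y₂ = E * (y₂ * t₁)) (hy : y₁ * y₂ = E * (y₂ * y₁)) :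
    Commute (t₁ * y₁) (t₂ * y₂) :=
  .mul_right
    (commute_mul_left_of_mul_eq_mul_swap hE hEc ht (mul_swap_eq_of_mul_eq_mul_swap hE ht₂y₁))
    (commute_mul_left_of_mul_eq_mul_swap hE hEc ht₁y₂ hy)

section Braid

variable {t₁ t₂ y₂ y₃ : R} (hmix₁ : t₂ * y₃ - E * (y₂ * t₂) = 1)
  (ht₁y₃ : t₁ * y₃ = E * (y₃ * t₁)) (hy : y₃ * y₂ = E * (y₂ * y₃))
include hmix₁ ht₁y₃ hy

theorem braid_mul_left_eq (ht₁ : t₁ * t₁ = 0) :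
    t₁ * y₂ * (t₂ * y₃) * (t₁ * y₂) = t₁ * t₂ * t₁ * (y₃ * y₂ * y₃) := by
  have pull (a b : R) : a * (E * b) = E * (a * b) := (hEc a).symm.left_comm b
  have hE' (a : R) : E * (E * a) = a := by rw [← mul_assoc, hE, one_mul]
  have hy₂t₂ := eq_mul_sub_of_sub_mul_eq_one hE hmix₁
  have hy₃t₁ := mul_swap_eq_of_mul_eq_mul_swap hE ht₁y₃
  calc t₁ * y₂ * (t₂ * y₃) * (t₁ * y₂)
    _ = t₁ * (y₂ * t₂) * (y₃ * t₁) * y₂ := by simp only [mul_assoc]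
    _ = t₁ * t₂ * y₃ * t₁ * y₃ * y₂ - t₁ * t₁ * y₃ * y₂ := by
      rw [hy₂t₂, hy₃t₁]; simp only [mul_sub, sub_mul, mul_assoc, pull, hE']
    _ = t₁ * t₂ * (y₃ * t₁) * (y₃ * y₂) := by rw [ht₁]; noncomm_ring
    _ = t₁ * t₂ * t₁ * (y₃ * y₂ * y₃) := by
      conv_lhs => rw [hy₃t₁, hy]
      simp only [mul_assoc, pull, hE']

theorem braid_mul_right_eq (hmix₂ : y₃ * t₂ - E * (t₂ * y₂) = 1) :
    t₂ * y₃ * (t₁ * y₂) * (t₂ * y₃) = t₂ * t₁ * t₂ * (y₃ * y₂ * y₃) := by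
  have pull (a b : R) : a * (E * b) = E * (a * b) := (hEc a).symm.left_comm b
  have hE' (a : R) : E * (E * a) = a := by rw [← mul_assoc, hE, one_mul]
  have hy₂t₂ := eq_mul_sub_of_sub_mul_eq_one hE hmix₁
  have hy₃t₂ : y₃ * t₂ = E * (t₂ * y₂) + 1 := sub_eq_iff_eq_add'.mp hmix₂
  have hy₃t₁ := mul_swap_eq_of_mul_eq_mul_swap hE ht₁y₃
  calc t₂ * y₃ * (t₁ * y₂) * (t₂ * y₃)
    _ = t₂ * (y₃ * t₁) * y₂ * (t₂ * y₃) := by simp only [mul_assoc]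
    _ = E * (t₂ * t₁ * (y₃ * y₂) * (t₂ * y₃)) := by
      rw [hy₃t₁]; simp only [mul_assoc, pull]
    _ = t₂ * t₁ * y₂ * (y₃ * t₂) * y₃ := by
      rw [hy]; simp only [mul_assoc, pull, hE']
    _ = E * (t₂ * t₁ * (y₂ * t₂) * y₂ * y₃) + t₂ * t₁ * y₂ * y₃ := by
      rw [hy₃t₂]; simp only [mul_add, add_mul, mul_one, mul_assoc, pull]
    _ = t₂ * t₁ * t₂ * y₃ * y₂ * y₃ - t₂ * t₁ * y₂ * y₃ + t₂ * t₁ * y₂ * y₃ := by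
      rw [hy₂t₂]; simp only [mul_sub, sub_mul, mul_assoc, pull, hE']
    _ = t₂ * t₁ * t₂ * (y₃ * y₂ * y₃) := by noncomm_ring

theorem braid_mul_eq (hmix₂ : y₃ * t₂ - E * (t₂ * y₂) = 1) (ht₁ : t₁ * t₁ = 0)
    (hbraid : t₂ * t₁ * t₂ = t₁ * t₂ * t₁) :
    t₁ * y₂ * (t₂ * y₃) * (t₁ * y₂) = t₂ * y₃ * (t₁ * y₂) * (t₂ * y₃) := by
  rw [braid_mul_left_eq hE hEc hmix₁ ht₁y₃ hy ht₁, braid_mul_right_eq hE hEc hmix₁ ht₁y₃ hy hmix₂,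
    hbraid]

end Braid

end CentralInvolution

theorem stmt_6_general {R : Type*} [Ring R] (n : ℕ) (pi : ℕ)
    (x τ : ℕ → R)
    -- supercommutation of the x's
    (hxx : ∀ p q, 1 ≤ p → p ≤ n → 1 ≤ q → q ≤ n → p ≠ q →
      x p * x q = (-1 : R) ^ pi * (x q * x p))
    -- τ_a² = Q_{ii}(x_a, x_{a+1}) = 0
    (hττ : ∀ a, 1 ≤ a → a < n → τ a * τ a = 0)
    -- τ_a x_p = (−1)^{p(i)} x_p τ_a for p ≠ a, a+1
    (hτx : ∀ a p, 1 ≤ a → a < n → 1 ≤ p → p ≤ n → p ≠ a → p ≠ a + 1 →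
      τ a * x p = (-1 : R) ^ pi * (x p * τ a))
    -- mixed relations: τ_a x_{a+1} − (−1)^{p(i)} x_a τ_a = x_{a+1} τ_a − (−1)^{p(i)} τ_a x_a = 1
    (hmix1 : ∀ a, 1 ≤ a → a < n →
      τ a * x (a + 1) - (-1 : R) ^ pi * (x a * τ a) = 1)
    (hmix2 : ∀ a, 1 ≤ a → a < n →
      x (a + 1) * τ a - (-1 : R) ^ pi * (τ a * x a) = 1)
    -- distant supercommutation of τ's
    (hdist : ∀ a b, 1 ≤ a → a < n → 1 ≤ b → b < n → (a + 1 < b ∨ b + 1 < a) →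
      τ a * τ b = (-1 : R) ^ pi * (τ b * τ a))
    -- braid relation
    (hbraid : ∀ a, 1 ≤ a → a + 1 < n →
      τ (a + 1) * τ a * τ (a + 1) = τ a * τ (a + 1) * τ a) :
    (∀ r s, 1 ≤ r → r < n → 1 ≤ s → s < n → (r + 1 < s ∨ s + 1 < r) →
      (τ r * x (r + 1)) * (τ s * x (s + 1)) = (τ s * x (s + 1)) * (τ r * x (r + 1)))
    ∧ (∀ r, 1 ≤ r → r + 1 < n →
      (τ r * x (r + 1)) * (τ (r + 1) * x (r + 2)) * (τ r * x (r + 1))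
        = (τ (r + 1) * x (r + 2)) * (τ r * x (r + 1)) * (τ (r + 1) * x (r + 2))) := by
  have hE : (-1 : R) ^ pi * (-1) ^ pi = 1 := by rw [← pow_add, Even.neg_one_pow ⟨pi, rfl⟩]
  have hEc (z : R) : Commute ((-1) ^ pi) z := (Commute.neg_one_left z).pow_left pi
  refine ⟨fun r s hr hrn hs hsn hrs => ?_, fun r hr hrn => ?_⟩
  · exact commute_mul_mul_of_mul_eq_mul_swap hE hEc (hdist r s hr hrn hs hsn hrs)
      (hτx s (r + 1) hs hsn (by omega) (by omega) (by omega) (by omega))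
      (hτx r (s + 1) hr hrn (by omega) (by omega) (by omega) (by omega))
      (hxx (r + 1) (s + 1) (by omega) (by omega) (by omega) (by omega) (by omega))
  · exact braid_mul_eq hE hEc (hmix1 (r + 1) (by omega) hrn)
      (hτx r (r + 2) hr (by omega) (by omega) (by omega) (by omega) (by omega))
      (hxx (r + 2) (r + 1) (by omega) (by omega) (by omega) (by omega) (by omega))
      (hmix2 (r + 1) (by omega) hrn)
      (hττ r hr (by omega)) (hbraid r hr hrn)

/-- In the nil-Hecke-type (one-color) quiver Hecke superalgebra `R(nα_i)`
(any ring containing elements `x_1,…,x_n`, `τ_1,…,τ_{n−1}` satisfying the one-color defining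
relations, with `Q_{ii} = 0` so that `τ_a² = 0`), the elements `b_k := τ_k x_{k+1}` (`1 ≤ k < n`)
satisfy the braid relations: `b_r b_s = b_s b_r` if `|r − s| > 1`, and
`b_r b_{r+1} b_r = b_{r+1} b_r b_{r+1}` for `1 ≤ r < n−1`. -/
theorem stmt_6 {R : Type*} [Ring R] (n : ℕ) (pi : ℕ) (hpi : pi ≤ 1)
    (x τ : ℕ → R)
    -- supercommutation of the x's
    (hxx : ∀ p q, 1 ≤ p → p ≤ n → 1 ≤ q → q ≤ n → p ≠ q →
      x p * x q = (-1 : R) ^ pi * (x q * x p))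
    -- τ_a² = Q_{ii}(x_a, x_{a+1}) = 0
    (hττ : ∀ a, 1 ≤ a → a < n → τ a * τ a = 0)
    -- τ_a x_p = (−1)^{p(i)} x_p τ_a for p ≠ a, a+1
    (hτx : ∀ a p, 1 ≤ a → a < n → 1 ≤ p → p ≤ n → p ≠ a → p ≠ a + 1 →
      τ a * x p = (-1 : R) ^ pi * (x p * τ a))
    -- mixed relations: τ_a x_{a+1} − (−1)^{p(i)} x_a τ_a = x_{a+1} τ_a − (−1)^{p(i)} τ_a x_a = 1
    (hmix1 : ∀ a, 1 ≤ a → a < n →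
      τ a * x (a + 1) - (-1 : R) ^ pi * (x a * τ a) = 1)
    (hmix2 : ∀ a, 1 ≤ a → a < n →
      x (a + 1) * τ a - (-1 : R) ^ pi * (τ a * x a) = 1)
    -- distant supercommutation of τ's
    (hdist : ∀ a b, 1 ≤ a → a < n → 1 ≤ b → b < n → (a + 1 < b ∨ b + 1 < a) →
      τ a * τ b = (-1 : R) ^ pi * (τ b * τ a))
    -- braid relation
    (hbraid : ∀ a, 1 ≤ a → a + 1 < n →
      τ (a + 1) * τ a * τ (a + 1) = τ a * τ (a + 1) * τ a) :
    (∀ r s, 1 ≤ r → r < n → 1 ≤ s → s < n → (r + 1 < s ∨ s + 1 < r) →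
      (τ r * x (r + 1)) * (τ s * x (s + 1)) = (τ s * x (s + 1)) * (τ r * x (r + 1)))
    ∧ (∀ r, 1 ≤ r → r + 1 < n →
      (τ r * x (r + 1)) * (τ (r + 1) * x (r + 2)) * (τ r * x (r + 1))
        = (τ (r + 1) * x (r + 2)) * (τ r * x (r + 1)) * (τ (r + 1) * x (r + 2))) :=
  stmt_6_general n pi x τ hxx hττ hτx hmix1 hmix2 hdist hbraid
end

section
/- Let w[1,n] denote the longest element of the symmetric group S_n and τ_{w[1,n]} the corresponding product of τ-generators in R(nα_i). Then the two-sided ideal generated by τ_{w[1,n]} is everything: R(nα_i) τ_{w[1,n]} R(nα_i) = R(nα_i). -/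
/-- `τ_{w[1,n]}`, the product of `τ`-generators along the chosen reduced expression
`w[1,n] = w[1,n−1] · s_{n−1} s_{n−2} ⋯ s_1` of the longest element of `S_n`. -/
def longTau {R : Type*} [Ring R] (τ : ℕ → R) : ℕ → R
  | 0 => 1
  | m + 1 => longTau τ m * ((List.range m).reverse.map (fun j => τ (j + 1))).prod

/-!
Write `τ_{w[1,n]} = W₀ W₁ ⋯ W_{n-1}` with `W_m = τ_m τ_{m-1} ⋯ τ_1`. For `m ≥ 1` the braid relation
gives `W_m² = 0`, and the mixed relation gives `W_m x_{m+1} = ±W_{m-1} ± x_m W_m`. Multiplying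
`W₀ ⋯ W_{g-1} · W_{g+1} ⋯ W_m` on the right by `x_{m+1}`, the terms containing a square `W_j²`
vanish and the remaining unwanted term is a left multiple of the same product, so the gap moves
from `g` to `g + 1`. Hence `τ_{w[1,m+1]}` lies in the ideal generated by `τ_{w[1,n]}` only if
`τ_{w[1,m]}` does, and descending to `m = 0` puts `1` in the ideal. Signs never matter, since `±1`
are units.
-/

section

variable {R : Type*} [Ring R]

def SignCommute (a b : R) : Prop := ∃ ε : ℤˣ, a * b = ε • (b * a)

namespace SignCommute

variable {a b c : R}

theorem one_left (b : R) : SignCommute 1 b := ⟨1, by simp⟩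

theorem mul_left (hac : SignCommute a c) (hbc : SignCommute b c) : SignCommute (a * b) c := by
  obtain ⟨ε, hε⟩ := hac
  obtain ⟨δ, hδ⟩ := hbc
  refine ⟨δ * ε, ?_⟩
  rw [mul_assoc, hδ, mul_smul_comm, ← mul_assoc, hε, smul_mul_assoc, smul_smul, mul_assoc]

theorem list_prod_left {l : List R} (h : ∀ a ∈ l, SignCommute a c) : SignCommute l.prod c := by
  induction l with
  | nil => exact one_left c
  | cons a l ih =>
    rw [List.prod_cons]
    exact (h a List.mem_cons_self).mul_left (ih fun b hb => h b (List.mem_cons_of_mem a hb))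

end SignCommute

theorem TwoSidedIdeal.units_smul_mem_iff {I : TwoSidedIdeal R} (ε : ℤˣ) {z : R} :
    ε • z ∈ I ↔ z ∈ I := by
  refine ⟨fun h => ?_, fun h => by simpa only [Units.smul_def] using I.zsmul_mem (ε : ℤ) h⟩
  have h' := I.zsmul_mem ((ε⁻¹ : ℤˣ) : ℤ) h
  rwa [← Units.smul_def, inv_smul_smul] at h'

open scoped Pointwise in
theorem closure_mul_mul_eq_top_of_one_mem_span {t : R} (h : (1 : R) ∈ TwoSidedIdeal.span {t}) :
    AddSubgroup.closure {z : R | ∃ u v : R, z = u * t * v} = ⊤ := by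
  have hset : {z : R | ∃ u v : R, z = u * t * v} = Set.univ * {t} * Set.univ := by
    ext z
    simp [Set.mem_mul, eq_comm]
  rw [eq_top_iff, hset]
  intro z _
  rw [← TwoSidedIdeal.mem_span_iff_mem_addSubgroup_closure, (TwoSidedIdeal.one_mem_iff _).mp h]
  trivial

-- `cycleTau τ m` is `W_m = τ_m τ_{m-1} ⋯ τ_1`.
def cycleTau (τ : ℕ → R) (m : ℕ) : R :=
  ((List.range m).reverse.map (fun j => τ (j + 1))).prod

def cycleProd (τ : ℕ → R) (a b : ℕ) : R :=
  ((List.Ico a b).map (cycleTau τ)).prod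

variable (τ : ℕ → R)

@[simp] theorem cycleTau_zero : cycleTau τ 0 = 1 := rfl

theorem cycleTau_succ (m : ℕ) : cycleTau τ (m + 1) = τ (m + 1) * cycleTau τ m := by
  simp [cycleTau, List.range_succ]

theorem longTau_succ (m : ℕ) : longTau τ (m + 1) = longTau τ m * cycleTau τ m := rfl

@[simp] theorem cycleProd_self (a : ℕ) : cycleProd τ a a = 1 := by
  simp [cycleProd, List.Ico.self_empty]

theorem cycleProd_succ_right {a b : ℕ} (h : a ≤ b) :
    cycleProd τ a (b + 1) = cycleProd τ a b * cycleTau τ b := by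
  simp [cycleProd, List.Ico.succ_top h]

theorem cycleProd_eq_cycleTau_mul {a b : ℕ} (h : a < b) :
    cycleProd τ a b = cycleTau τ a * cycleProd τ (a + 1) b := by
  simp [cycleProd, List.Ico.eq_cons h]

theorem cycleProd_zero_left (m : ℕ) : cycleProd τ 0 m = longTau τ m := by
  induction m with
  | zero => rfl
  | succ m ih => rw [cycleProd_succ_right τ m.zero_le, ih, longTau_succ]

theorem cycleProd_one_left (m : ℕ) : cycleProd τ 1 (m + 1) = longTau τ (m + 1) := by
  rw [← cycleProd_zero_left, cycleProd_eq_cycleTau_mul τ m.succ_pos, cycleTau_zero, one_mul]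

-- Relations of `R(nα_i)`, each only up to a sign `±1`.
structure IsSignedNilHecke (n : ℕ) (x τ : ℕ → R) : Prop where
  tau_mul_self : ∀ a, 1 ≤ a → a < n → τ a * τ a = 0
  signCommute_tau_x : ∀ a p, 1 ≤ a → a + 1 < p → p ≤ n → SignCommute (τ a) (x p)
  tau_mul_x_succ : ∀ a, 1 ≤ a → a < n → ∃ ε : ℤˣ, τ a * x (a + 1) = 1 + ε • (x a * τ a)
  signCommute_tau_tau : ∀ a b, 1 ≤ a → a + 1 < b → b < n → SignCommute (τ a) (τ b)
  braid : ∀ a, 1 ≤ a → a + 1 < n → τ (a + 1) * τ a * τ (a + 1) = τ a * τ (a + 1) * τ a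

namespace IsSignedNilHecke

variable {n : ℕ} {x : ℕ → R} {τ}

theorem signCommute_cycleTau_x (h : IsSignedNilHecke n x τ) {m p : ℕ} (hp : m + 2 ≤ p)
    (hpn : p ≤ n) :
    SignCommute (cycleTau τ m) (x p) := by
  refine SignCommute.list_prod_left fun a ha => ?_
  simp only [List.mem_map, List.mem_reverse, List.mem_range] at ha
  obtain ⟨j, hj, rfl⟩ := ha
  exact h.signCommute_tau_x (j + 1) p (by omega) (by omega) hpn

theorem signCommute_cycleTau_tau (h : IsSignedNilHecke n x τ) {m b : ℕ} (hb : m + 2 ≤ b)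
    (hbn : b < n) :
    SignCommute (cycleTau τ m) (τ b) := by
  refine SignCommute.list_prod_left fun a ha => ?_
  simp only [List.mem_map, List.mem_reverse, List.mem_range] at ha
  obtain ⟨j, hj, rfl⟩ := ha
  exact h.signCommute_tau_tau (j + 1) b (by omega) (by omega) hbn

theorem signCommute_longTau_x (h : IsSignedNilHecke n x τ) {m : ℕ} (hm : m < n) :
    SignCommute (longTau τ m) (x (m + 1)) := by
  rw [← cycleProd_zero_left]
  refine SignCommute.list_prod_left fun a ha => ?_
  simp only [List.mem_map, List.Ico.mem] at ha
  obtain ⟨i, hi, rfl⟩ := ha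
  exact h.signCommute_cycleTau_x (by omega) (by omega)

theorem cycleTau_mul_self (h : IsSignedNilHecke n x τ) {m : ℕ} (hm : m + 1 < n) :
    cycleTau τ (m + 1) * cycleTau τ (m + 1) = 0 := by
  induction m with
  | zero => simpa [cycleTau_succ] using h.tau_mul_self 1 le_rfl hm
  | succ k ih =>
    obtain ⟨ε, hε⟩ := h.signCommute_cycleTau_tau (m := k) (b := k + 2) le_rfl hm
    have hbraid : τ (k + 2) * τ (k + 1) * τ (k + 2) = τ (k + 1) * τ (k + 2) * τ (k + 1) :=
      h.braid (k + 1) (by omega) hm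
    calc cycleTau τ (k + 2) * cycleTau τ (k + 2)
        = τ (k + 2) * τ (k + 1) * (cycleTau τ k * τ (k + 2)) * cycleTau τ (k + 1) := by
          simp only [cycleTau_succ, mul_assoc]
      _ = ε • (τ (k + 2) * τ (k + 1) * τ (k + 2) * (cycleTau τ k * cycleTau τ (k + 1))) := by
          simp only [hε, mul_smul_comm, smul_mul_assoc, mul_assoc]
      _ = ε • (τ (k + 1) * τ (k + 2) * (cycleTau τ (k + 1) * cycleTau τ (k + 1))) := by
          rw [hbraid]
          simp only [cycleTau_succ, mul_assoc]
      _ = 0 := by rw [ih (by omega), mul_zero, smul_zero]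

theorem cycleTau_mul_x_succ (h : IsSignedNilHecke n x τ) {m : ℕ} (hm : m + 1 < n) :
    ∃ ε δ : ℤˣ, cycleTau τ (m + 1) * x (m + 2) =
      ε • cycleTau τ m + δ • (x (m + 1) * cycleTau τ (m + 1)) := by
  obtain ⟨ε, hε⟩ := h.signCommute_cycleTau_x (m := m) (p := m + 2) le_rfl (by omega)
  obtain ⟨δ, hδ⟩ := h.tau_mul_x_succ (m + 1) (by omega) hm
  refine ⟨ε, ε * δ, ?_⟩
  calc cycleTau τ (m + 1) * x (m + 2) = ε • (τ (m + 1) * x (m + 2) * cycleTau τ m) := by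
        rw [cycleTau_succ, mul_assoc, hε, mul_smul_comm, mul_assoc]
    _ = ε • cycleTau τ m + (ε * δ) • (x (m + 1) * cycleTau τ (m + 1)) := by
        rw [hδ, cycleTau_succ]
        simp only [add_mul, one_mul, smul_add, smul_mul_assoc, smul_smul, mul_assoc]

theorem cycleProd_mul_x (h : IsSignedNilHecke n x τ) {g m : ℕ} (hgm : g < m) (hm : m < n) :
    ∃ ε δ : ℤˣ, cycleProd τ (g + 1) (m + 1) * x (m + 1) =
      ε • (cycleTau τ g * cycleProd τ (g + 2) (m + 1)) +
        δ • (x (g + 1) * cycleProd τ (g + 1) (m + 1)) := by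
  induction m, hgm using Nat.le_induction with
  | base =>
    simpa [cycleProd_succ_right τ le_rfl] using h.cycleTau_mul_x_succ (m := g) hm
  | succ m hgm ih =>
    obtain ⟨ε, δ, hD⟩ := ih (by omega)
    obtain ⟨ε', δ', hC⟩ := h.cycleTau_mul_x_succ hm
    obtain ⟨m, rfl⟩ : ∃ m', m = m' + 1 := ⟨m - 1, by omega⟩
    have hzero : cycleProd τ (g + 1) (m + 2) * cycleTau τ (m + 1) = 0 := by
      rw [cycleProd_succ_right τ (by omega : g + 1 ≤ m + 1), mul_assoc,
        h.cycleTau_mul_self (m := m) (by omega), mul_zero]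
    refine ⟨δ' * ε, δ' * δ, ?_⟩
    calc cycleProd τ (g + 1) (m + 3) * x (m + 3)
        = ε' • (cycleProd τ (g + 1) (m + 2) * cycleTau τ (m + 1)) +
            δ' • (cycleProd τ (g + 1) (m + 2) * x (m + 2) * cycleTau τ (m + 2)) := by
          rw [cycleProd_succ_right τ (by omega : g + 1 ≤ m + 2), mul_assoc, hC]
          simp only [mul_add, mul_smul_comm, mul_assoc]
      _ = (δ' * ε) • (cycleTau τ g * cycleProd τ (g + 2) (m + 3)) +
            (δ' * δ) • (x (g + 1) * cycleProd τ (g + 1) (m + 3)) := by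
          rw [hzero, smul_zero, zero_add, hD, cycleProd_succ_right τ (by omega : g + 2 ≤ m + 2),
            cycleProd_succ_right τ (by omega : g + 1 ≤ m + 2)]
          simp only [add_mul, smul_add, smul_mul_assoc, smul_smul, mul_assoc]

theorem longTau_mul_cycleProd_mem (h : IsSignedNilHecke n x τ) {I : TwoSidedIdeal R} {g m : ℕ}
    (hgm : g < m) (hm : m < n)
    (hI : longTau τ g * cycleProd τ (g + 1) (m + 1) ∈ I) :
    longTau τ (g + 1) * cycleProd τ (g + 2) (m + 1) ∈ I := by
  obtain ⟨ε, δ, hD⟩ := h.cycleProd_mul_x hgm hm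
  obtain ⟨γ, hγ⟩ := h.signCommute_longTau_x (m := g) (by omega)
  have key : longTau τ g * cycleProd τ (g + 1) (m + 1) * x (m + 1) =
      ε • (longTau τ (g + 1) * cycleProd τ (g + 2) (m + 1)) +
        (δ * γ) • (x (g + 1) * (longTau τ g * cycleProd τ (g + 1) (m + 1))) := by
    rw [mul_assoc, hD, mul_add, mul_smul_comm, mul_smul_comm, ← mul_assoc, ← mul_assoc, hγ,
      longTau_succ]
    simp only [smul_mul_assoc, smul_smul, mul_assoc]
  have hε : ε • (longTau τ (g + 1) * cycleProd τ (g + 2) (m + 1)) ∈ I := by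
    have hsub := I.sub_mem (I.mul_mem_right _ (x (m + 1)) hI)
      ((I.units_smul_mem_iff (δ * γ)).mpr (I.mul_mem_left (x (g + 1)) _ hI))
    rwa [key, add_sub_cancel_right] at hsub
  exact (I.units_smul_mem_iff ε).mp hε

theorem longTau_mem_of_succ_mem (h : IsSignedNilHecke n x τ) {I : TwoSidedIdeal R} {m : ℕ}
    (hm : m < n) (hI : longTau τ (m + 1) ∈ I) : longTau τ m ∈ I := by
  -- `longTau τ g * cycleProd τ (g + 1) (m + 1)` is `W₀ ⋯ W_m` with the factor `W_g` left out.
  have gap : ∀ g ≤ m, longTau τ g * cycleProd τ (g + 1) (m + 1) ∈ I := by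
    intro g hg
    induction g with
    | zero => rwa [longTau, one_mul, cycleProd_one_left]
    | succ g ih => exact h.longTau_mul_cycleProd_mem (by omega) hm (ih (by omega))
  simpa using gap m le_rfl

theorem one_mem_span_longTau (h : IsSignedNilHecke n x τ) :
    (1 : R) ∈ TwoSidedIdeal.span {longTau τ n} :=
  Nat.decreasingInduction (motive := fun m _ => longTau τ m ∈ TwoSidedIdeal.span {longTau τ n})
    (fun _ hk ih => h.longTau_mem_of_succ_mem hk ih)
    (TwoSidedIdeal.subset_span rfl) n.zero_le

end IsSignedNilHecke

end

theorem stmt_7_general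
    {R : Type*} [Ring R]
    (n : ℕ) (pi : ℕ)
    (x τ : ℕ → R)
    (hττ : ∀ a, 1 ≤ a → a < n → τ a * τ a = 0)
    (hτx : ∀ a p, 1 ≤ a → a < n → 1 ≤ p → p ≤ n → p ≠ a → p ≠ a + 1 →
      τ a * x p = (-1 : R) ^ pi * (x p * τ a))
    (hmix1 : ∀ a, 1 ≤ a → a < n →
      τ a * x (a + 1) - (-1 : R) ^ pi * (x a * τ a) = 1)
    (hdist : ∀ a b, 1 ≤ a → a < n → 1 ≤ b → b < n → (a + 1 < b ∨ b + 1 < a) →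
      τ a * τ b = (-1 : R) ^ pi * (τ b * τ a))
    (hbraid : ∀ a, 1 ≤ a → a + 1 < n →
      τ (a + 1) * τ a * τ (a + 1) = τ a * τ (a + 1) * τ a) :
    AddSubgroup.closure {z : R | ∃ u v : R, z = u * longTau τ n * v} = ⊤ := by
  have hsign (r : R) : (-1 : R) ^ pi * r = ((-1 : ℤˣ) ^ pi) • r := by simp [Units.smul_def]
  have h : IsSignedNilHecke n x τ :=
    { tau_mul_self := hττ
      signCommute_tau_x := fun a p ha hap hp =>
        ⟨_, (hτx a p ha (by omega) (by omega) hp (by omega) (by omega)).trans (hsign _)⟩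
      tau_mul_x_succ := fun a ha han =>
        ⟨_, eq_add_of_sub_eq (hsign (x a * τ a) ▸ hmix1 a ha han)⟩
      signCommute_tau_tau := fun a b ha hab hb =>
        ⟨_, (hdist a b ha (by omega) (by omega) hb (Or.inl hab)).trans (hsign _)⟩
      braid := hbraid }
  exact closure_mul_mul_eq_top_of_one_mem_span h.one_mem_span_longTau

/-- Let `w[1,n]` denote the longest element of the symmetric group `S_n` and
`τ_{w[1,n]}` the corresponding product of `τ`-generators in the one-color quiver Hecke
superalgebra `R(nα_i)` (over a base with `2` invertible).  Then the two-sided ideal generated by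
`τ_{w[1,n]}` is everything: `R(nα_i) τ_{w[1,n]} R(nα_i) = R(nα_i)`. -/
theorem stmt_7 {k : Type*} [CommRing k] (h2 : IsUnit (2 : k))
    {R : Type*} [Ring R] [Algebra k R]
    (n : ℕ) (pi : ℕ) (hpi : pi ≤ 1)
    (x τ : ℕ → R)
    (hxx : ∀ p q, 1 ≤ p → p ≤ n → 1 ≤ q → q ≤ n → p ≠ q →
      x p * x q = (-1 : R) ^ pi * (x q * x p))
    (hττ : ∀ a, 1 ≤ a → a < n → τ a * τ a = 0)
    (hτx : ∀ a p, 1 ≤ a → a < n → 1 ≤ p → p ≤ n → p ≠ a → p ≠ a + 1 →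
      τ a * x p = (-1 : R) ^ pi * (x p * τ a))
    (hmix1 : ∀ a, 1 ≤ a → a < n →
      τ a * x (a + 1) - (-1 : R) ^ pi * (x a * τ a) = 1)
    (hmix2 : ∀ a, 1 ≤ a → a < n →
      x (a + 1) * τ a - (-1 : R) ^ pi * (τ a * x a) = 1)
    (hdist : ∀ a b, 1 ≤ a → a < n → 1 ≤ b → b < n → (a + 1 < b ∨ b + 1 < a) →
      τ a * τ b = (-1 : R) ^ pi * (τ b * τ a))
    (hbraid : ∀ a, 1 ≤ a → a + 1 < n →
      τ (a + 1) * τ a * τ (a + 1) = τ a * τ (a + 1) * τ a) :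
    AddSubgroup.closure {z : R | ∃ u v : R, z = u * longTau τ n * v} = ⊤ :=
  stmt_7_general n pi x τ hττ hτx hmix1 hdist hbraid
end

section
/- Suppose f e(ν) M = 0 for an R(n)-module M, f ∈ P_n, ν ∈ I^n, and 1 ≤ a < n with ν_a = ν_{a+1} = i. Then (∂_a f)(x_a − x_{a+1})^{p(i)} e(ν) M = 0, and (x_a² + x_{a+1}²)^{p(i)} (s̄_a f) e(ν) M = 0. -/
/-!
Since `ν` is fixed by `s_a` and `Q_{ii} = 0`, `τ_a` commutes with `e(ν)` and `τ_a² e(ν) = 0`.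
Work modulo the two-sided ideal `J = Ann M`, which contains
`τ_a f e(ν) = (s̄_a f · τ_a + ∂_a f) e(ν)`; multiplying on the right by `τ_a` gives
`∂_a f · τ_a e(ν) ∈ J`. With `x = x_a`, `y = x_{a+1}`, `p = p(i)` and `G = (y - x)^p`, the mixed
relations give `y^{1+p} τ_a e(ν) = G e(ν) + τ_a x^{1+p} e(ν)`, so a right factor `τ_a` can be
traded for `G`: if `w` commutes with `y^{1+p}` and `w τ_a e(ν) ∈ J`, then `w G e(ν) ∈ J`.
This gives `∂_a f · G e(ν) ∈ J`, then `s̄_a f · G τ_a e(ν) ∈ J` (multiply by `G` on the right),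
and once more `s̄_a f · G² e(ν) ∈ J`, where `G² e(ν) = (x² + y²)^p e(ν)`.
-/

open Finset

/-- The generators of a quiver Hecke superalgebra on `n+1` strands inside a `k`-algebra `R`:
idempotents `e(ν)` (`ν ∈ I^{n+1}`), (super)polynomial generators `x_1,…,x_{n+1}` and
intertwiners `τ_1,…,τ_n`, together with the parity function `pa` and the coefficients `t`
(supported in degrees `< D`) of the polynomials `Q_{ij}`. -/
structure QHS (k R I : Type*) [CommRing k] [Ring R] [Algebra k R] (n : ℕ) where
  pa : I → ℕ
  D : ℕ
  t : I → I → ℕ → ℕ → k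
  e : (Fin (n + 1) → I) → R
  x : Fin (n + 1) → R
  τ : Fin n → R

namespace QHS

variable {k R I : Type*} [CommRing k] [Ring R] [Algebra k R] {n : ℕ}

/-- The transposition `s_a = (a, a+1)` acting on `{1, …, n+1}`. -/
def sw (a : Fin n) : Equiv.Perm (Fin (n + 1)) := Equiv.swap a.castSucc a.succ

/-- The polynomial `Q_{ij}(u,v) = Σ_{r,s} t_{i,j;(r,s)} u^r v^s` (`0` if `i = j`). -/
def Qpol [DecidableEq I] (d : QHS k R I n) (i j : I) (u v : R) : R :=
  if i = j then 0 else
    ∑ r ∈ range d.D, ∑ s ∈ range d.D, d.t i j r s • (u ^ r * v ^ s)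

/-- The defining relations (R1)–(R8) of the quiver Hecke superalgebra, together with the
standing conditions on the coefficients `t` of the `Q_{ij}`. -/
structure IsRep [Fintype I] [DecidableEq I] (d : QHS k R I n) : Prop where
  pa01 : ∀ i, d.pa i ≤ 1
  tsymm : ∀ i j r s, d.t i j r s = d.t j i s r
  todd : ∀ i j r s, d.pa i = 1 → r % 2 = 1 → d.t i j r s = 0
  ortho : ∀ μ ν, d.e μ * d.e ν = if μ = ν then d.e ν else 0
  esum : ∑ ν : Fin (n + 1) → I, d.e ν = 1
  xx : ∀ (ν : Fin (n + 1) → I) (p q : Fin (n + 1)), p ≠ q →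
    d.x p * d.x q * d.e ν
      = ((-1 : k) ^ (d.pa (ν p) * d.pa (ν q))) • (d.x q * d.x p * d.e ν)
  xe : ∀ (ν : Fin (n + 1) → I) (p : Fin (n + 1)), d.x p * d.e ν = d.e ν * d.x p
  τe : ∀ (ν : Fin (n + 1) → I) (a : Fin n),
    d.τ a * d.e ν = d.e (fun p => ν (sw a p)) * d.τ a
  τx : ∀ (ν : Fin (n + 1) → I) (a : Fin n) (p : Fin (n + 1)),
    p ≠ a.castSucc → p ≠ a.succ →
    d.τ a * d.x p * d.e ν
      = ((-1 : k) ^ (d.pa (ν p) * (d.pa (ν a.castSucc) * d.pa (ν a.succ)))) •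
          (d.x p * d.τ a * d.e ν)
  mixed1 : ∀ (ν : Fin (n + 1) → I) (a : Fin n),
    (d.τ a * d.x a.succ
        - ((-1 : k) ^ (d.pa (ν a.castSucc) * d.pa (ν a.succ))) • (d.x a.castSucc * d.τ a))
      * d.e ν
      = if ν a.castSucc = ν a.succ then d.e ν else 0
  mixed2 : ∀ (ν : Fin (n + 1) → I) (a : Fin n),
    (d.x a.succ * d.τ a
        - ((-1 : k) ^ (d.pa (ν a.castSucc) * d.pa (ν a.succ))) • (d.τ a * d.x a.castSucc))
      * d.e ν
      = if ν a.castSucc = ν a.succ then d.e ν else 0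
  τsq : ∀ (ν : Fin (n + 1) → I) (a : Fin n),
    d.τ a * d.τ a * d.e ν
      = d.Qpol (ν a.castSucc) (ν a.succ) (d.x a.castSucc) (d.x a.succ) * d.e ν
  ττ : ∀ (ν : Fin (n + 1) → I) (a b : Fin n),
    (a : ℕ) + 1 < (b : ℕ) ∨ (b : ℕ) + 1 < (a : ℕ) →
    d.τ a * d.τ b * d.e ν
      = ((-1 : k) ^ (d.pa (ν a.castSucc) * d.pa (ν a.succ) *
            (d.pa (ν b.castSucc) * d.pa (ν b.succ)))) • (d.τ b * d.τ a * d.e ν)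
  braid : ∀ (ν : Fin (n + 1) → I) (a b : Fin n), (b : ℕ) = (a : ℕ) + 1 →
    (d.τ b * d.τ a * d.τ b - d.τ a * d.τ b * d.τ a) * d.e ν
      = if ν a.castSucc = ν b.succ then
          (if d.pa (ν a.castSucc) = 0 then
            (∑ r ∈ range d.D, ∑ s ∈ range d.D, d.t (ν a.castSucc) (ν a.succ) r s •
                ((∑ u ∈ range r, d.x b.succ ^ u * d.x a.castSucc ^ (r - 1 - u)) *
                  d.x a.succ ^ s)) * d.e ν
          else
            ((-1 : k) ^ d.pa (ν a.succ)) •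
              ((d.x b.succ - d.x a.castSucc) *
                (∑ r ∈ range d.D, ∑ s ∈ range d.D, d.t (ν a.castSucc) (ν a.succ) r s •
                    ((∑ u ∈ range (r / 2),
                        d.x b.succ ^ (2 * u) * d.x a.castSucc ^ (r - 2 - 2 * u)) *
                      d.x a.succ ^ s)) * d.e ν))
        else 0

end QHS

namespace TwoSidedIdeal

variable {R : Type*} [Ring R] (J : TwoSidedIdeal R)

theorem mul_mul_mem_of_mul_τ_mul_mem {w τ e X Y G : R}
    (hτe : τ * e = e * τ) (hXe : X * e = e * X)
    (hmixed : Y * τ * e = G * e + τ * X * e) (hw : Y * w * e = w * Y * e)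
    (hwτ : w * τ * e ∈ J) : w * G * e ∈ J := by
  have hY : Y * (w * τ * e) = w * (Y * τ * e) := by
    calc Y * (w * τ * e) = Y * w * e * τ := by simp only [mul_assoc, hτe]
      _ = w * (Y * τ * e) := by rw [hw]; simp only [mul_assoc, hτe]
  have hX : w * τ * e * X = w * (τ * X * e) := by simp only [mul_assoc, hXe]
  have : w * G * e = Y * (w * τ * e) - w * τ * e * X := by
    rw [hY, hX, hmixed]; noncomm_ring
  rw [this]
  exact J.sub_mem (J.mul_mem_left _ _ hwτ) (J.mul_mem_right _ _ hwτ)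

theorem mul_mem_of_τ_mul_mem {τ e X Y G s g : R}
    (hτe : τ * e = e * τ) (hττe : τ * τ * e = 0) (hXe : X * e = e * X)
    (hGe : G * e = e * G) (hmixed : Y * τ * e = G * e + τ * X * e)
    (hτG : τ * G * e = G * τ * e) (hYG : Y * G * e = G * Y * e)
    (hg : Y * g = g * Y) (hs : Y * s = s * Y)
    (h : (s * τ + g) * e ∈ J) :
    g * G * e ∈ J ∧ s * G * G * e ∈ J := by
  have hgτ : g * τ * e ∈ J := by
    have : (s * τ + g) * e * τ = g * τ * e := by
      simp only [add_mul, mul_assoc, ← hτe]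
      rw [← mul_assoc τ τ e, hττe, mul_zero, zero_add]
    simpa only [this] using J.mul_mem_right _ τ h
  have hgG : g * G * e ∈ J :=
    J.mul_mul_mem_of_mul_τ_mul_mem hτe hXe hmixed (by rw [hg]) hgτ
  have hsGτ : s * G * τ * e ∈ J := by
    have : (s * τ + g) * e * G = s * G * τ * e + g * G * e := by
      simp only [add_mul, mul_assoc, ← hGe]
      rw [← mul_assoc τ, hτG]
      simp only [mul_assoc]
    have hG := J.mul_mem_right _ G h
    rw [this] at hG
    simpa using J.sub_mem hG hgG
  refine ⟨hgG, J.mul_mul_mem_of_mul_τ_mul_mem hτe hXe hmixed ?_ hsGτ⟩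
  calc Y * (s * G) * e = s * (Y * G * e) := by rw [← mul_assoc, hs]; simp only [mul_assoc]
    _ = s * G * Y * e := by rw [hYG]; simp only [mul_assoc]

end TwoSidedIdeal

section OddRelations

/-! Consequences of the odd nilHecke relations `τ y + x τ = 1 = y τ + τ x`, `x y = -y x` on two
strands, imposed only after right multiplication by `e`. -/

variable {R : Type*} [Ring R] {x y τ e : R}

theorem sq_mul_τ_mul_of_odd (hxe : x * e = e * x) (h : y * τ * e + τ * x * e = e) :
    y ^ 2 * τ * e = (y - x) * e + τ * x ^ 2 * e := by
  have h' : y * τ * e = e - τ * x * e := eq_sub_of_add_eq h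
  have hyτx : y * τ * x * e = x * e - τ * x ^ 2 * e := by
    calc y * τ * x * e = y * τ * e * x := by rw [mul_assoc _ x, hxe, ← mul_assoc]
      _ = x * e - τ * x ^ 2 * e := by
          rw [h', sub_mul, ← hxe, mul_assoc (τ * x) e x, ← hxe, pow_two]; noncomm_ring
  calc y ^ 2 * τ * e = y * (y * τ * e) := by simp only [pow_two, mul_assoc]
    _ = y * e - y * τ * x * e := by rw [h']; noncomm_ring
    _ = (y - x) * e + τ * x ^ 2 * e := by rw [hyτx]; noncomm_ring

theorem τ_mul_sub_mul_of_odd (h₁ : τ * y * e + x * τ * e = e) (h₂ : y * τ * e + τ * x * e = e) :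
    τ * (y - x) * e = (y - x) * τ * e := by
  have : τ * (y - x) * e = (e - x * τ * e) - (e - y * τ * e) := by
    rw [← eq_sub_of_add_eq h₁, ← eq_sub_of_add_eq' h₂]; noncomm_ring
  rw [this]; noncomm_ring

theorem sq_mul_sub_mul_of_odd (hye : y * e = e * y) (hxy : x * y * e = -(y * x * e)) :
    y ^ 2 * (y - x) * e = (y - x) * y ^ 2 * e := by
  have : x * y ^ 2 * e = y ^ 2 * x * e := by
    calc x * y ^ 2 * e = x * y * e * y := by
          rw [pow_two, ← mul_assoc, mul_assoc (x * y) y e, hye, ← mul_assoc]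
      _ = y ^ 2 * x * e := by
          rw [hxy, neg_mul, mul_assoc (y * x) e y, ← hye, ← mul_assoc, mul_assoc y x y,
            mul_assoc y (x * y) e, hxy]
          noncomm_ring
  simp only [sub_mul, mul_sub, this]
  noncomm_ring

theorem sub_mul_sub_mul_of_odd (hxy : x * y * e = -(y * x * e)) :
    (y - x) * (y - x) * e = (x ^ 2 + y ^ 2) * e := by
  have : (y - x) * (y - x) * e = y * y * e - y * x * e - x * y * e + x * x * e := by noncomm_ring
  rw [this, hxy]; noncomm_ring

end OddRelations

namespace QHS

variable {k R I : Type*} [CommRing k] [Ring R] [Algebra k R] {n : ℕ}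
  {ν : Fin (n + 1) → I} {a : Fin n}

theorem comp_sw_eq_self (hν : ν a.castSucc = ν a.succ) : (fun p => ν (sw a p)) = ν := by
  funext p
  rcases eq_or_ne p a.castSucc with rfl | h
  · rw [sw, Equiv.swap_apply_left, hν]
  rcases eq_or_ne p a.succ with rfl | h'
  · rw [sw, Equiv.swap_apply_right, hν]
  · rw [sw, Equiv.swap_apply_of_ne_of_ne h h']

namespace IsRep

variable [Fintype I] [DecidableEq I] {d : QHS k R I n}

theorem τ_mul_e_comm (hd : d.IsRep) (hν : ν a.castSucc = ν a.succ) :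
    d.τ a * d.e ν = d.e ν * d.τ a := by
  rw [hd.τe ν a, comp_sw_eq_self hν]

theorem τ_mul_τ_mul_e (hd : d.IsRep) (hν : ν a.castSucc = ν a.succ) :
    d.τ a * d.τ a * d.e ν = 0 := by
  rw [hd.τsq ν a, hν, Qpol, if_pos rfl, zero_mul]

theorem x_succ_mul_τ_mul_e_of_even (hd : d.IsRep) (hν : ν a.castSucc = ν a.succ)
    (hp : d.pa (ν a.succ) = 0) :
    d.x a.succ * d.τ a * d.e ν = 1 * d.e ν + d.τ a * d.x a.castSucc * d.e ν := by
  have h := hd.mixed2 ν a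
  rw [if_pos hν, hν, hp, mul_zero, pow_zero, one_smul, sub_mul] at h
  rw [one_mul]
  exact sub_eq_iff_eq_add.mp h

theorem τ_mul_x_succ_mul_e_of_odd (hd : d.IsRep) (hν : ν a.castSucc = ν a.succ)
    (hp : d.pa (ν a.succ) = 1) :
    d.τ a * d.x a.succ * d.e ν + d.x a.castSucc * d.τ a * d.e ν = d.e ν := by
  have h := hd.mixed1 ν a
  rw [if_pos hν, hν, hp, mul_one, pow_one, neg_one_smul, sub_neg_eq_add, add_mul] at h
  exact h

theorem x_succ_mul_τ_mul_e_of_odd (hd : d.IsRep) (hν : ν a.castSucc = ν a.succ)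
    (hp : d.pa (ν a.succ) = 1) :
    d.x a.succ * d.τ a * d.e ν + d.τ a * d.x a.castSucc * d.e ν = d.e ν := by
  have h := hd.mixed2 ν a
  rw [if_pos hν, hν, hp, mul_one, pow_one, neg_one_smul, sub_neg_eq_add, add_mul] at h
  exact h

theorem x_castSucc_mul_x_succ_mul_e_of_odd (hd : d.IsRep) (hν : ν a.castSucc = ν a.succ)
    (hp : d.pa (ν a.succ) = 1) :
    d.x a.castSucc * d.x a.succ * d.e ν = -(d.x a.succ * d.x a.castSucc * d.e ν) := by
  rw [hd.xx ν _ _ (Fin.castSucc_lt_succ (i := a)).ne, hν, hp, mul_one, pow_one, neg_one_smul]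

theorem mem_of_τ_mul_mem_of_even (hd : d.IsRep) (J : TwoSidedIdeal R)
    (hν : ν a.castSucc = ν a.succ) (hp : d.pa (ν a.succ) = 0) {s g : R}
    (hg : d.x a.succ * g = g * d.x a.succ) (hs : d.x a.succ * s = s * d.x a.succ)
    (hτf : (s * d.τ a + g) * d.e ν ∈ J) :
    g * d.e ν ∈ J ∧ s * d.e ν ∈ J := by
  simpa only [mul_one] using J.mul_mem_of_τ_mul_mem (hd.τ_mul_e_comm hν)
    (hd.τ_mul_τ_mul_e hν) (hd.xe ν _) (by simp) (hd.x_succ_mul_τ_mul_e_of_even hν hp)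
    (by simp) (by simp) hg hs hτf

theorem mem_of_τ_mul_mem_of_odd (hd : d.IsRep) (J : TwoSidedIdeal R)
    (hν : ν a.castSucc = ν a.succ) (hp : d.pa (ν a.succ) = 1) {s g : R}
    (hg : d.x a.succ ^ 2 * g = g * d.x a.succ ^ 2)
    (hs : d.x a.succ ^ 2 * s = s * d.x a.succ ^ 2)
    (hτf : (s * d.τ a + g) * d.e ν ∈ J) :
    g * (d.x a.succ - d.x a.castSucc) * d.e ν ∈ J ∧
      s * (d.x a.castSucc ^ 2 + d.x a.succ ^ 2) * d.e ν ∈ J := by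
  have hxe : ∀ p, d.x p * d.e ν = d.e ν * d.x p := hd.xe ν
  have hxxe := hd.x_castSucc_mul_x_succ_mul_e_of_odd hν hp
  obtain ⟨hg', hs'⟩ := J.mul_mem_of_τ_mul_mem (hd.τ_mul_e_comm hν) (hd.τ_mul_τ_mul_e hν)
    (by rw [pow_two, mul_assoc, hxe, ← mul_assoc, hxe, mul_assoc])
    (by rw [sub_mul, mul_sub, hxe, hxe])
    (sq_mul_τ_mul_of_odd (hxe _) (hd.x_succ_mul_τ_mul_e_of_odd hν hp))
    (τ_mul_sub_mul_of_odd (hd.τ_mul_x_succ_mul_e_of_odd hν hp)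
      (hd.x_succ_mul_τ_mul_e_of_odd hν hp))
    (sq_mul_sub_mul_of_odd (hxe _) hxxe) hg hs hτf
  refine ⟨hg', ?_⟩
  rwa [mul_assoc s, mul_assoc s, sub_mul_sub_mul_of_odd hxxe, ← mul_assoc] at hs'

end IsRep

end QHS

theorem stmt_9_general {k R I : Type*} [CommRing k] [Ring R] [Algebra k R]
    [Fintype I] [DecidableEq I] {n : ℕ}
    (d : QHS k R I n) (hd : d.IsRep)
    {M : Type*} [AddCommGroup M] [Module R M]
    (ν : Fin (n + 1) → I) (a : Fin n) (i : I)
    (hνa : ν a.castSucc = i) (hνa1 : ν a.succ = i)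
    (f sf df : R)
    -- τ_a f = (s̄_a f) τ_a + ∂_a f
    (hτf : d.τ a * f = sf * d.τ a + df)
    -- the even generators x^{1+p(i)} are central in P_n
    (hcent : ∀ p : Fin (n + 1),
      d.x p ^ (1 + d.pa i) * df = df * d.x p ^ (1 + d.pa i) ∧
      d.x p ^ (1 + d.pa i) * sf = sf * d.x p ^ (1 + d.pa i) ∧
      d.x p ^ (1 + d.pa i) * f = f * d.x p ^ (1 + d.pa i))
    -- the hypothesis: f e(ν) M = 0
    (hM : ∀ m : M, (f * d.e ν) • m = 0) :
    (∀ m : M, (df * (d.x a.castSucc - d.x a.succ) ^ d.pa i * d.e ν) • m = 0)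
    ∧ (∀ m : M, ((d.x a.castSucc ^ 2 + d.x a.succ ^ 2) ^ d.pa i * sf * d.e ν) • m = 0)
    ∧ (∀ m : M, (sf * (d.x a.castSucc ^ 2 + d.x a.succ ^ 2) ^ d.pa i * d.e ν) • m = 0) := by
  set J := TwoSidedIdeal.ker (Module.toAddMonoidEnd R M)
  have mem_J : ∀ r : R, r ∈ J ↔ ∀ m : M, r • m = 0 := fun r => by
    rw [TwoSidedIdeal.mem_ker, DFunLike.ext_iff]
    rfl
  simp only [← mem_J]
  have hν : ν a.castSucc = ν a.succ := hνa.trans hνa1.symm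
  have hτfe : (sf * d.τ a + df) * d.e ν ∈ J := by
    rw [← hτf, mul_assoc]
    exact J.mul_mem_left _ _ ((mem_J _).2 hM)
  rcases Nat.le_one_iff_eq_zero_or_eq_one.mp (hd.pa01 i) with hp | hp
  · obtain ⟨hdf, hsf⟩ := hd.mem_of_τ_mul_mem_of_even J hν (hνa1 ▸ hp)
      (by simpa [hp] using (hcent a.succ).1) (by simpa [hp] using (hcent a.succ).2.1) hτfe
    simp only [hp, pow_zero, mul_one, one_mul]
    exact ⟨hdf, hsf, hsf⟩
  · obtain ⟨hdf, hsf⟩ := hd.mem_of_τ_mul_mem_of_odd J hν (hνa1 ▸ hp)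
      (by simpa [hp] using (hcent a.succ).1) (by simpa [hp] using (hcent a.succ).2.1) hτfe
    have hsf_comm : (d.x a.castSucc ^ 2 + d.x a.succ ^ 2) * sf
        = sf * (d.x a.castSucc ^ 2 + d.x a.succ ^ 2) := by
      simpa [hp, add_mul, mul_add] using
        congrArg₂ (· + ·) (hcent a.castSucc).2.1 (hcent a.succ).2.1
    simp only [hp, pow_one]
    rw [hsf_comm]
    refine ⟨?_, hsf, hsf⟩
    rw [← neg_sub, mul_neg, neg_mul]
    exact J.neg_mem hdf

/-- Suppose `f e(ν) M = 0` for an `R(n)`-module `M`, where `f ∈ P_n` (the skew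
polynomial subalgebra), `ν ∈ I^n` and `1 ≤ a < n` with `ν_a = ν_{a+1} = i`.  Then
`(∂_a f)(x_a − x_{a+1})^{p(i)} e(ν) M = 0` and `(x_a² + x_{a+1}²)^{p(i)} (s̄_a f) e(ν) M = 0`
(equivalently `(s̄_a f)(x_a² + x_{a+1}²)^{p(i)} e(ν) M = 0`).  Here `sf = s̄_a f` and
`df = ∂_a f` are characterized by `τ_a f = (s̄_a f) τ_a + ∂_a f` and by the divided-difference
identity `(∂_a f)(x_{a+1}^{1+p(i)} − x_a^{1+p(i)}) e(ν)
 = ((x_{a+1} − x_a)^{p(i)} f − (s̄_a f)(x_{a+1} − x_a)^{p(i)}) e(ν)`. -/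
theorem stmt_9 {k R I : Type*} [CommRing k] [Ring R] [Algebra k R]
    [Fintype I] [DecidableEq I] {n : ℕ} (h2 : IsUnit (2 : k))
    (d : QHS k R I n) (hd : d.IsRep)
    {M : Type*} [AddCommGroup M] [Module R M]
    (ν : Fin (n + 1) → I) (a : Fin n) (i : I)
    (hνa : ν a.castSucc = i) (hνa1 : ν a.succ = i)
    (f sf df : R)
    -- f, s̄_a f, ∂_a f lie in the skew polynomial subalgebra P_n
    (hfP : f ∈ Algebra.adjoin k (Set.range d.x ∪ Set.range d.e))
    (hsfP : sf ∈ Algebra.adjoin k (Set.range d.x ∪ Set.range d.e))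
    (hdfP : df ∈ Algebra.adjoin k (Set.range d.x ∪ Set.range d.e))
    -- τ_a f = (s̄_a f) τ_a + ∂_a f
    (hτf : d.τ a * f = sf * d.τ a + df)
    -- defining property of the super divided-difference operator ∂_a (on the e(ν)-component)
    (hdf : df * (d.x a.succ ^ (1 + d.pa i) - d.x a.castSucc ^ (1 + d.pa i)) * d.e ν
      = ((d.x a.succ - d.x a.castSucc) ^ d.pa i * f
          - sf * (d.x a.succ - d.x a.castSucc) ^ d.pa i) * d.e ν)
    -- the even generators x^{1+p(i)} are central in P_n
    (hcent : ∀ p : Fin (n + 1),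
      d.x p ^ (1 + d.pa i) * df = df * d.x p ^ (1 + d.pa i) ∧
      d.x p ^ (1 + d.pa i) * sf = sf * d.x p ^ (1 + d.pa i) ∧
      d.x p ^ (1 + d.pa i) * f = f * d.x p ^ (1 + d.pa i))
    -- the hypothesis: f e(ν) M = 0
    (hM : ∀ m : M, (f * d.e ν) • m = 0) :
    (∀ m : M, (df * (d.x a.castSucc - d.x a.succ) ^ d.pa i * d.e ν) • m = 0)
    ∧ (∀ m : M, ((d.x a.castSucc ^ 2 + d.x a.succ ^ 2) ^ d.pa i * sf * d.e ν) • m = 0)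
    ∧ (∀ m : M, (sf * (d.x a.castSucc ^ 2 + d.x a.succ ^ 2) ^ d.pa i * d.e ν) • m = 0) :=
  stmt_9_general d hd ν a i hνa hνa1 f sf df hτf hcent hM
end
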